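/- arXiv:2506.04754 — 11 statements merged into one kernel-verified Lean document; each statement's English description precedes it below -/
import Mathlib

section
/- Let ê be a unit vector in ℝ³ and R := −I + 2 ê⊗ê the 180° rotation about ê. Let F, G be real 3×3 matrices with positive determinant such that F = Q̃ G R for some rotation Q̃ ∈ SO(3) and F^T F ≠ G^T G. Then the equation Q F − G = a ⊗ n̂ has the following two solutions: (Type I) there exists Q_I ∈ SO(3) with Q_I F − G = a_I ⊗ n̂_I where a_I = 2( G^{-T}ê/|G^{-T}ê|² − Gê ) and n̂_I = ê; (Type II) for any ρ ≠ 0 there exists Q_{II} ∈ SO(3) with Q_{II} F − G = a_{II} ⊗ n̂_{II} where a_{II} = ρ Gê and n̂_{II} = (2/ρ)( ê − G^T G ê/|Gê|² ) (Mallard's law, Gurtin). -/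
open Matrix

noncomputable section

abbrev V3 : Type := Fin 3 → ℝ
abbrev M3 : Type := Matrix (Fin 3) (Fin 3) ℝ

/-- `Q` is a rotation matrix: `Q ∈ SO(3)`. -/
def SO3 (Q : M3) : Prop := Q.transpose * Q = 1 ∧ Q.det = 1

/-- Rank-one matrix `a ⊗ n` with entries `aᵢ nⱼ`. -/
def outer (a n : V3) : M3 := Matrix.vecMulVec a n

lemma transpose_outer (a b : V3) : (outer a b).transpose = outer b a := by
  ext i j; simp [outer, vecMulVec_apply, mul_comm]

lemma mul_outer (M : M3) (a b : V3) : M * outer a b = outer (M *ᵥ a) b := by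
  ext i j
  simp [outer, vecMulVec_apply, Matrix.mul_apply, mulVec, dotProduct, Fin.sum_univ_three]
  ring

lemma outer_mul (a b : V3) (M : M3) : outer a b * M = outer a (M.transpose *ᵥ b) := by
  ext i j
  simp [outer, vecMulVec_apply, Matrix.mul_apply, mulVec, dotProduct, transpose_apply, Fin.sum_univ_three]
  ring

lemma outer_mul_outer (a b c d : V3) :
    outer a b * outer c d = (b ⬝ᵥ c) • outer a d := by
  ext i j
  simp [outer, vecMulVec_apply, Matrix.mul_apply, dotProduct, Fin.sum_univ_three]
  ring

lemma smul_outer_left (r : ℝ) (a b : V3) : outer (r • a) b = r • outer a b := by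
  ext i j; simp [outer, vecMulVec_apply, mul_assoc]

lemma smul_outer_right (r : ℝ) (a b : V3) : outer a (r • b) = r • outer a b := by
  ext i j; simp [outer, vecMulVec_apply]; ring

lemma outer_sub_left (a b c : V3) : outer (a - b) c = outer a c - outer b c := by
  ext i j; simp [outer, vecMulVec_apply]; ring

lemma outer_sub_right (a b c : V3) : outer a (b - c) = outer a b - outer a c := by
  ext i j; simp [outer, vecMulVec_apply]; ring

lemma refl3_aux (c : V3) (t : ℝ) (ht : t * (c ⬝ᵥ c) = 2) :
    SO3 (-1 + t • outer c c) := by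
  have ht' : t * (c 0 * c 0 + c 1 * c 1 + c 2 * c 2) = 2 := by
    simpa [dotProduct, Fin.sum_univ_three] using ht
  constructor
  · have hT : (-1 + t • outer c c).transpose = -1 + t • outer c c := by
      simp [transpose_add, transpose_neg, transpose_one, transpose_smul, transpose_outer]
    rw [hT]
    obtain ⟨S, hS⟩ : ∃ S : ℝ, c ⬝ᵥ c = S := ⟨_, rfl⟩
    have hPP : outer c c * outer c c = S • outer c c := by
      rw [outer_mul_outer c c c c, hS]
    rw [hS] at ht
    simp only [add_mul, mul_add, neg_mul, one_mul, mul_neg, mul_one, smul_mul_assoc,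
      mul_smul_comm, hPP, smul_smul, neg_neg]
    match_scalars <;> (first | linear_combination t * ht | linear_combination (-t) * ht | linear_combination 2 * t * ht | linear_combination (-2 * t) * ht | ring)
  · simp [Matrix.det_fin_three, Matrix.add_apply, Matrix.neg_apply, Matrix.one_apply,
      Matrix.smul_apply, outer, vecMulVec_apply, smul_eq_mul]
    linear_combination ht' 

def refl3 (c : V3) : M3 := -1 + (2 / (c ⬝ᵥ c)) • outer c c

lemma refl3_SO3 (c : V3) (hc : c ⬝ᵥ c ≠ 0) : SO3 (refl3 c) := by
  apply refl3_aux
  have hc' : c 0 * c 0 + c 1 * c 1 + c 2 * c 2 ≠ 0 := by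
    simpa [dotProduct, Fin.sum_univ_three] using hc
  field_simp

lemma SO3_mul {A B : M3} (hA : SO3 A) (hB : SO3 B) : SO3 (A * B) := by
  refine ⟨?_, by rw [det_mul, hA.2, hB.2, one_mul]⟩
  rw [transpose_mul, mul_assoc, ← mul_assoc A.transpose, hA.1, one_mul, hB.1]

/-- **Mallard's law (Gurtin).** If `F = Q̃ G R` with `R = −I + 2 ê⊗ê` a 180°
rotation and `Fᵀ F ≠ Gᵀ G`, then `Q F − G = a ⊗ n̂` has the Type I solution
`a_I = 2(G⁻ᵀê/|G⁻ᵀê|² − Gê)`, `n̂_I = ê`, and for each `ρ ≠ 0` the Type II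
solution `a_II = ρ Gê`, `n̂_II = (2/ρ)(ê − GᵀGê/|Gê|²)`. -/
theorem mallard
    (e : V3) (he : e ⬝ᵥ e = 1)
    (R : M3) (hR : R = -1 + (2 : ℝ) • outer e e)
    (F G : M3) (hF : 0 < F.det) (hG : 0 < G.det)
    (Qt : M3) (hQt : SO3 Qt) (hFGR : F = Qt * G * R)
    (hne : F.transpose * F ≠ G.transpose * G)
    (aI nI : V3)
    (haI : aI = (2 : ℝ) •
      ((1 / ((G⁻¹).transpose.mulVec e ⬝ᵥ (G⁻¹).transpose.mulVec e)) •
          (G⁻¹).transpose.mulVec e - G.mulVec e))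
    (hnI : nI = e) :
    (∃ QI : M3, SO3 QI ∧ QI * F - G = outer aI nI) ∧
    (∀ ρ : ℝ, ρ ≠ 0 →
      ∃ QII : M3, SO3 QII ∧
        QII * F - G = outer (ρ • G.mulVec e)
          ((2 / ρ) • (e - (1 / (G.mulVec e ⬝ᵥ G.mulVec e)) •
            (G.transpose * G).mulVec e))) := by
  obtain ⟨hQtT, hQtdet⟩ := hQt
  have hGdet : IsUnit G.det := isUnit_iff_ne_zero.mpr (ne_of_gt hG)
  have hGinv' : G⁻¹ * G = 1 := nonsing_inv_mul G hGdet
  have hQtQtT : Qt * Qt.transpose = 1 := mul_eq_one_comm.mp hQtT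
  have hQtTso : SO3 Qt.transpose :=
    ⟨by rw [transpose_transpose]; exact hQtQtT, by rw [det_transpose]; exact hQtdet⟩
  set f : V3 := G *ᵥ e with hf
  set g : V3 := (G⁻¹).transpose *ᵥ e with hg
  have he0 : e ≠ 0 := by
    intro h; rw [h] at he; simp [dotProduct] at he
  have hGtg : G.transpose *ᵥ g = e := by
    have h1 : G.transpose * (G⁻¹).transpose = 1 := by
      rw [← transpose_mul, hGinv', transpose_one]
    rw [hg, mulVec_mulVec, h1, one_mulVec]
  have hg0 : g ≠ 0 := by
    intro h; rw [h, mulVec_zero] at hGtg; exact he0 hGtg.symm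
  have hf0 : f ≠ 0 := by
    intro h
    have : G⁻¹ *ᵥ f = e := by rw [hf, mulVec_mulVec, hGinv', one_mulVec]
    rw [h, mulVec_zero] at this; exact he0 this.symm
  have hs0 : g ⬝ᵥ g ≠ 0 := fun h => hg0 (dotProduct_self_eq_zero.mp h)
  have ht0 : f ⬝ᵥ f ≠ 0 := fun h => hf0 (dotProduct_self_eq_zero.mp h)
  have hGR : G * R = -G + (2 : ℝ) • outer f e := by
    rw [hR, mul_add, mul_neg_one, Matrix.mul_smul, mul_outer]
  have hgf : g ⬝ᵥ f = 1 := by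
    rw [hf, dotProduct_mulVec, ← mulVec_transpose, hGtg, he]
  -- cancellation of Qt
  have hcancel : ∀ M : M3, (M * Qt.transpose) * F = M * (G * R) := by
    intro M
    rw [hFGR, mul_assoc M, ← mul_assoc Qt.transpose, ← mul_assoc Qt.transpose,
      hQtT, one_mul]
  constructor
  · -- Type I
    refine ⟨refl3 g * Qt.transpose, SO3_mul (refl3_SO3 g hs0) hQtTso, ?_⟩
    rw [hcancel (refl3 g), hGR, hnI, haI]
    obtain ⟨s, hs⟩ : ∃ s : ℝ, g ⬝ᵥ g = s := ⟨_, rfl⟩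
    rw [hs] at hs0
    have e1 : outer g g * G = outer g e := by rw [outer_mul, hGtg]
    have e2 : outer g g * outer f e = (1 : ℝ) • outer g e := by
      rw [outer_mul_outer, hgf]
    have hout : outer ((2:ℝ) • ((1/s) • g - f)) e
        = (2:ℝ) • ((1/s) • outer g e - outer f e) := by
      rw [smul_outer_left, outer_sub_left, smul_outer_left]
    unfold refl3
    rw [hs]
    show (-1 + (2 / s) • outer g g) * (-G + (2:ℝ) • outer f e) - G
      = outer ((2:ℝ) • ((1/s) • g - f)) e
    rw [hout]
    simp only [add_mul, mul_add, neg_mul, one_mul, mul_neg, smul_mul_assoc,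
      Matrix.mul_smul, e1, e2, smul_smul, neg_neg]
    match_scalars <;> field_simp <;> try ring
  · -- Type II
    intro ρ hρ
    refine ⟨refl3 f * Qt.transpose, SO3_mul (refl3_SO3 f ht0) hQtTso, ?_⟩
    rw [hcancel (refl3 f), hGR]
    obtain ⟨t, ht⟩ : ∃ t : ℝ, f ⬝ᵥ f = t := ⟨_, rfl⟩
    rw [ht] at ht0
    have hw : (G.transpose * G) *ᵥ e = G.transpose *ᵥ f := by
      rw [← mulVec_mulVec]
    have e1 : outer f f * G = outer f (G.transpose *ᵥ f) := outer_mul f f G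
    have e2 : outer f f * outer f e = t • outer f e := by
      rw [outer_mul_outer, ht]
    have hout : outer (ρ • f) ((2/ρ) • (e - (1/t) • (G.transpose * G) *ᵥ e))
        = (ρ * (2/ρ)) • (outer f e - (1/t) • outer f (G.transpose *ᵥ f)) := by
      rw [smul_outer_left, smul_outer_right, smul_smul, hw, outer_sub_right,
        smul_outer_right]
    have hρ2 : ρ * (2/ρ) = 2 := by field_simp
    unfold refl3
    rw [ht, hout, hρ2]
    simp only [add_mul, mul_add, neg_mul, one_mul, mul_neg, smul_mul_assoc,
      Matrix.mul_smul, e1, e2, smul_smul, neg_neg]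
    match_scalars <;> field_simp <;> try ring
end
end

section
/- Let U be a symmetric positive-definite real 3×3 matrix, ê₁ a unit vector in ℝ³, and V := (−I + 2 ê₁⊗ê₁) U (−I + 2 ê₁⊗ê₁), with V ≠ U. Then there exists a unit vector ê₂ not parallel to ê₁ such that V = (−I + 2 ê₂⊗ê₂) U (−I + 2 ê₂⊗ê₂) if and only if ê₁ is perpendicular to some eigenvector of U. Moreover, in that case ê₁ · ê₂ = 0 and {ê₁, ê₂, û} is an orthonormal basis of ℝ³, where û is that (normalized) eigenvector of U. -/
open Matrix

noncomputable section

def Rm (e : V3) : M3 := -1 + (2:ℝ) • outer e e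

lemma outer_mulVec (a b x : V3) : (outer a b).mulVec x = (b ⬝ᵥ x) • a := by
  funext i
  simp [outer, Matrix.mulVec, dotProduct, vecMulVec_apply, Fin.sum_univ_three]
  ring

lemma R_mulVec (e x : V3) : (Rm e).mulVec x = -x + (2 * (e ⬝ᵥ x)) • e := by
  rw [Rm, add_mulVec, neg_mulVec, one_mulVec, smul_mulVec, outer_mulVec, smul_smul]

lemma ext_mulVec {A B : M3} (h : ∀ v : V3, A.mulVec v = B.mulVec v) : A = B := by
  ext i j
  have := congrFun (h (Pi.single j 1)) i
  simpa [Matrix.mulVec_single] using this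

lemma R_sq (e : V3) (he : e ⬝ᵥ e = 1) : Rm e * Rm e = 1 := by
  apply ext_mulVec
  intro v
  rw [← mulVec_mulVec, R_mulVec, R_mulVec, one_mulVec]
  simp [dotProduct_add, dotProduct_neg, dotProduct_smul, he]
  module

lemma Rdot (e x z : V3) : x ⬝ᵥ ((Rm e).mulVec z) = ((Rm e).mulVec x) ⬝ᵥ z := by
  rw [R_mulVec, R_mulVec]
  simp [dotProduct_add, dotProduct_neg, dotProduct_smul, add_dotProduct, neg_dotProduct,
    smul_dotProduct, dotProduct_comm e x]
  ring

lemma cross_cross_eq (a b c : V3) : (a ⨯₃ b) ⨯₃ c = (a ⬝ᵥ c) • b - (b ⬝ᵥ c) • a := by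
  funext i
  fin_cases i <;> simp [cross_apply, dotProduct, Fin.sum_univ_three] <;> ring

lemma cross_cross_eq' (a b c : V3) : a ⨯₃ (b ⨯₃ c) = (a ⬝ᵥ c) • b - (a ⬝ᵥ b) • c := by
  funext i
  fin_cases i <;> simp [cross_apply, dotProduct, Fin.sum_univ_three] <;> ring

lemma resolve (u v x : V3) (huu : u ⬝ᵥ u = 1) (hvv : v ⬝ᵥ v = 1) (hxx : x ⬝ᵥ x = 1)
    (huv : u ⬝ᵥ v = 0) (hux : u ⬝ᵥ x = 0) (hvx : v ⬝ᵥ x = 0) (y : V3) :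
    y = (u ⬝ᵥ y) • u + (v ⬝ᵥ y) • v + (x ⬝ᵥ y) • x := by
  set B : M3 := Matrix.of ![u, v, x] with hBdef
  have hB : B * Bᵀ = 1 := by
    simp only [dotProduct, Fin.sum_univ_three] at huu hvv hxx huv hux hvx
    ext i j
    fin_cases i <;> fin_cases j <;>
      simp [hBdef, Matrix.mul_apply, Matrix.transpose, Matrix.one_apply, Fin.sum_univ_three,
        Matrix.vecHead, Matrix.vecTail] <;>
      linarith
  have hBt : Bᵀ * B = 1 := mul_eq_one_comm.mp hB
  have h1 : (Bᵀ * B).mulVec y = y := by rw [hBt, one_mulVec]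
  conv_lhs => rw [← h1]
  rw [← mulVec_mulVec]
  funext k
  simp [hBdef, Matrix.mulVec, dotProduct, Fin.sum_univ_three, Matrix.transpose_apply]
  ring

lemma dot_self_nonneg (v : V3) : 0 ≤ v ⬝ᵥ v :=
  Finset.sum_nonneg fun i _ => mul_self_nonneg (v i)

lemma core (U : M3) (hsym : ∀ x y : V3, U.mulVec x ⬝ᵥ y = x ⬝ᵥ U.mulVec y)
    (e1 e2 : V3) (he1 : e1 ⬝ᵥ e1 = 1) (he2 : e2 ⬝ᵥ e2 = 1)
    (hind : ¬ ∃ t : ℝ, e2 = t • e1)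
    (h : Rm e1 * U * Rm e1 = Rm e2 * U * Rm e2)
    (hne : Rm e1 * U * Rm e1 ≠ U) :
    e1 ⬝ᵥ e2 = 0 ∧ ∃ μ : ℝ, ∃ u : V3, u ⬝ᵥ u = 1 ∧ U.mulVec u = μ • u ∧
      e1 ⬝ᵥ u = 0 ∧ e2 ⬝ᵥ u = 0 := by
  have hc' : e2 ⬝ᵥ e1 = e1 ⬝ᵥ e2 := dotProduct_comm e2 e1
  set c : ℝ := e1 ⬝ᵥ e2 with hc
  -- independence gives 1 - c² ≠ 0
  have hc2 : 1 - c^2 ≠ 0 := by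
    intro h0
    apply hind
    refine ⟨c, ?_⟩
    have hz : (e2 - c • e1) ⬝ᵥ (e2 - c • e1) = 0 := by
      simp only [sub_dotProduct, dotProduct_sub, smul_dotProduct, dotProduct_smul,
        he1, he2, hc', smul_eq_mul, ← hc]
      nlinarith [h0]
    have := dotProduct_self_eq_zero.mp hz
    rw [sub_eq_zero] at this
    exact this
  have hR1 : Rm e1 * Rm e1 = 1 := R_sq e1 he1
  have hR2 : Rm e2 * Rm e2 = 1 := R_sq e2 he2
  have hcomm : U * (Rm e1 * Rm e2) = (Rm e1 * Rm e2) * U := by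
    have h1 : Rm e1 * (Rm e1 * U * Rm e1) * Rm e2 = U * (Rm e1 * Rm e2) := by
      calc Rm e1 * (Rm e1 * U * Rm e1) * Rm e2
          = (Rm e1 * Rm e1) * (U * (Rm e1 * Rm e2)) := by noncomm_ring
        _ = U * (Rm e1 * Rm e2) := by rw [hR1, one_mul]
    have h2 : Rm e1 * (Rm e2 * U * Rm e2) * Rm e2 = (Rm e1 * Rm e2) * U := by
      calc Rm e1 * (Rm e2 * U * Rm e2) * Rm e2
          = ((Rm e1 * Rm e2) * U) * (Rm e2 * Rm e2) := by noncomm_ring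
        _ = (Rm e1 * Rm e2) * U := by rw [hR2, mul_one]
    rw [← h1, h, h2]
  set w : V3 := e1 ⨯₃ e2 with hwdef
  have hww : w ⬝ᵥ w = 1 - c^2 := by
    rw [hwdef, cross_dot_cross, he1, he2, hc', ← hc]
    ring
  have hw1 : e1 ⬝ᵥ w = 0 := dot_self_cross e1 e2
  have hw2 : e2 ⬝ᵥ w = 0 := dot_cross_self e1 e2
  have hQw : (Rm e1 * Rm e2).mulVec w = w := by
    rw [← mulVec_mulVec, R_mulVec e2 w, hw2]
    norm_num
    rw [R_mulVec]
    simp [dotProduct_neg, hw1]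
  have hfix : ∀ v : V3, (Rm e1 * Rm e2).mulVec v = v → e1 ⬝ᵥ v = 0 ∧ e2 ⬝ᵥ v = 0 := by
    intro v hv
    rw [← mulVec_mulVec, R_mulVec e2 v, R_mulVec e1] at hv
    have h1 := congrArg (fun z => e1 ⬝ᵥ z) hv
    have h2 := congrArg (fun z => e2 ⬝ᵥ z) hv
    simp only [dotProduct_add, dotProduct_neg, dotProduct_smul, smul_eq_mul,
      he1, he2, hc', ← hc, neg_neg, neg_add_rev] at h1 h2
    have hb : (e2 ⬝ᵥ v) * (1 - c^2) = 0 := by linear_combination (c/2) * h1 - (1/2) * h2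
    have hb0 : e2 ⬝ᵥ v = 0 := by
      rcases mul_eq_zero.mp hb with h' | h'
      · exact h'
      · exact absurd h' hc2
    constructor
    · linear_combination (-1/2) * h1 + c * hb0
    · exact hb0
  have hQUw : (Rm e1 * Rm e2).mulVec (U.mulVec w) = U.mulVec w := by
    rw [mulVec_mulVec, ← hcomm, ← mulVec_mulVec, hQw]
  obtain ⟨hd1, hd2⟩ := hfix _ hQUw
  set t : ℝ := (w ⬝ᵥ U.mulVec w) / (1 - c^2) with ht
  have hcrossw : w ⨯₃ U.mulVec w = 0 := by
    have hcc := cross_cross_eq e1 e2 (U.mulVec w)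
    rw [← hwdef, hd1, hd2] at hcc
    simpa using hcc
  have hUw : U.mulVec w = t • w := by
    have hwy : w ⬝ᵥ (U.mulVec w - t • w) = 0 := by
      rw [dotProduct_sub, dotProduct_smul, hww, smul_eq_mul, ht]
      field_simp
      ring
    have hcy : w ⨯₃ (U.mulVec w - t • w) = 0 := by
      rw [map_sub, _root_.map_smul, hcrossw, cross_self]
      simp
    have hiden := cross_cross_eq' w w (U.mulVec w - t • w)
    rw [hcy, hwy, hww, map_zero] at hiden
    have h0 : (1 - c^2) • (U.mulVec w - t • w) = 0 := by
      rw [zero_smul, zero_sub] at hiden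
      rw [← neg_eq_zero, ← hiden]
    rcases smul_eq_zero.mp h0 with h' | h'
    · exact absurd h' hc2
    · rw [sub_eq_zero] at h'
      exact h'
  have hsym' : e2 ⬝ᵥ U.mulVec e1 = e1 ⬝ᵥ U.mulVec e2 := by
    rw [← hsym e1 e2, dotProduct_comm]
  have key : ∀ x y : V3, ((Rm e1).mulVec x) ⬝ᵥ (U.mulVec ((Rm e1).mulVec y))
      = ((Rm e2).mulVec x) ⬝ᵥ (U.mulVec ((Rm e2).mulVec y)) := by
    intro x y
    have h' := congrArg (fun M : M3 => x ⬝ᵥ M.mulVec y) h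
    simp only [← mulVec_mulVec] at h'
    rwa [Rdot, Rdot] at h'
  have E1 := key e1 e1
  have E2 := key e1 e2
  have E3 := key e2 e2
  simp only [R_mulVec, he1, he2, hc', ← hc, mulVec_add, mulVec_neg, mulVec_smul,
    dotProduct_add, dotProduct_neg, dotProduct_smul, add_dotProduct, neg_dotProduct,
    smul_dotProduct, smul_eq_mul, hsym', neg_neg] at E1 E2 E3
  have hc0 : c = 0 := by
    by_contra hcne
    have r3 : e1 ⬝ᵥ U.mulVec e2 = c * (e1 ⬝ᵥ U.mulVec e1) := by
      have hh : c * (e1 ⬝ᵥ U.mulVec e2 - c * (e1 ⬝ᵥ U.mulVec e1)) = 0 := by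
        linear_combination (-1/4) * E3
      rcases mul_eq_zero.mp hh with h' | h'
      · exact absurd h' hcne
      · linarith [h']
    -- the eigen component of U e1 orthogonal to e1 in the plane vanishes
    have hwU1 : w ⬝ᵥ U.mulVec e1 = 0 := by
      rw [← hsym w e1, hUw, smul_dotProduct, dotProduct_comm w e1, hw1]
      simp
    have h0le : (0:ℝ) ≤ 1 - c^2 := by
      rw [← hww]; exact dot_self_nonneg w
    have hpos : 0 < 1 - c^2 := lt_of_le_of_ne h0le (Ne.symm hc2)
    set s : ℝ := Real.sqrt (1 - c^2) with hsdef
    have hs2 : s^2 = 1 - c^2 := Real.sq_sqrt hpos.le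
    have hs0 : s ≠ 0 := by
      intro h0
      rw [h0] at hs2
      simp at hs2
      exact hc2 (by linarith)
    set e2' : V3 := s⁻¹ • (e2 - c • e1) with he2'def
    set wh : V3 := s⁻¹ • w with hwhdef
    have d1 : e1 ⬝ᵥ e2' = 0 := by
      rw [he2'def, dotProduct_smul, dotProduct_sub, dotProduct_smul, he1, ← hc]
      simp
    have d2 : e1 ⬝ᵥ wh = 0 := by
      rw [hwhdef, dotProduct_smul, hw1]; simp
    have d3 : e2' ⬝ᵥ wh = 0 := by
      rw [he2'def, hwhdef, smul_dotProduct, dotProduct_smul, sub_dotProduct,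
        smul_dotProduct, hw1, hw2]
      simp
    have d4 : e2' ⬝ᵥ e2' = 1 := by
      rw [he2'def]
      simp only [smul_dotProduct, dotProduct_smul, sub_dotProduct, dotProduct_sub,
        smul_eq_mul, he1, he2, hc', ← hc]
      field_simp
      linear_combination - hs2
    have d5 : wh ⬝ᵥ wh = 1 := by
      rw [hwhdef, smul_dotProduct, dotProduct_smul, hww, smul_eq_mul, smul_eq_mul]
      field_simp
      linear_combination - hs2
    have hres := resolve e1 e2' wh he1 d4 d5 d1 d2 d3 (U.mulVec e1)
    have ce2' : e2' ⬝ᵥ U.mulVec e1 = 0 := by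
      rw [he2'def, smul_dotProduct, sub_dotProduct, smul_dotProduct, hsym', r3]
      simp
    have cwh : wh ⬝ᵥ U.mulVec e1 = 0 := by
      rw [hwhdef, smul_dotProduct, hwU1]; simp
    rw [ce2', cwh, zero_smul, zero_smul, add_zero, add_zero] at hres
    -- hres : U *ᵥ e1 = (e1 ⬝ᵥ U *ᵥ e1) • e1
    apply hne
    apply ext_mulVec
    intro v
    have he1Uv : e1 ⬝ᵥ U.mulVec v = (e1 ⬝ᵥ U.mulVec e1) * (e1 ⬝ᵥ v) := by
      rw [← hsym e1 v]
      conv_lhs => rw [hres]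
      rw [smul_dotProduct, smul_eq_mul]
    rw [← mulVec_mulVec, ← mulVec_mulVec, R_mulVec e1 v, mulVec_add, mulVec_neg,
      mulVec_smul]
    conv_lhs => rw [hres]
    rw [R_mulVec]
    simp only [dotProduct_add, dotProduct_neg, dotProduct_smul, smul_eq_mul, he1,
      he1Uv, smul_smul]
    module
  refine ⟨hc0, t, w, ?_, hUw, hw1, hw2⟩
  rw [hww, hc0]
  norm_num

lemma bwd (U : M3) (hsym : ∀ x y : V3, U.mulVec x ⬝ᵥ y = x ⬝ᵥ U.mulVec y)
    (e1 : V3) (he1 : e1 ⬝ᵥ e1 = 1) (μ : ℝ) (u : V3) (hu : u ≠ 0)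
    (heig : U.mulVec u = μ • u) (hperp : e1 ⬝ᵥ u = 0) :
    ∃ e2 : V3, e2 ⬝ᵥ e2 = 1 ∧ (¬ ∃ t : ℝ, e2 = t • e1) ∧
      Rm e1 * U * Rm e1 = Rm e2 * U * Rm e2 := by
  have hu0 : u ⬝ᵥ u ≠ 0 := fun h0 => hu (dotProduct_self_eq_zero.mp h0)
  have hu2 : 0 < u ⬝ᵥ u := lt_of_le_of_ne (dot_self_nonneg u) (Ne.symm hu0)
  set n : ℝ := Real.sqrt (u ⬝ᵥ u) with hn
  have hn2 : n^2 = u ⬝ᵥ u := Real.sq_sqrt hu2.le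
  have hn0 : n ≠ 0 := (Real.sqrt_pos.mpr hu2).ne'
  set uh : V3 := n⁻¹ • u with huhdef
  have huh1 : uh ⬝ᵥ uh = 1 := by
    rw [huhdef, smul_dotProduct, dotProduct_smul, smul_eq_mul, smul_eq_mul, ← hn2]
    field_simp
  have heig' : U.mulVec uh = μ • uh := by
    rw [huhdef, mulVec_smul, heig, smul_comm]
  have hperp' : e1 ⬝ᵥ uh = 0 := by
    rw [huhdef, dotProduct_smul, hperp, smul_zero]
  set e2 : V3 := e1 ⨯₃ uh with he2def
  have he2 : e2 ⬝ᵥ e2 = 1 := by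
    rw [he2def, cross_dot_cross, he1, huh1, hperp', dotProduct_comm uh e1, hperp']
    ring
  have h12 : e1 ⬝ᵥ e2 = 0 := by rw [he2def]; exact dot_self_cross e1 uh
  have h2u : uh ⬝ᵥ e2 = 0 := by rw [he2def]; exact dot_cross_self e1 uh
  have h2u' : e2 ⬝ᵥ uh = 0 := by rw [dotProduct_comm]; exact h2u
  have h21 : e2 ⬝ᵥ e1 = 0 := by rw [dotProduct_comm]; exact h12
  have hind : ¬ ∃ t : ℝ, e2 = t • e1 := by
    rintro ⟨t, ht⟩
    have h1 : t = 0 := by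
      have h' := h12
      rw [ht, dotProduct_smul, he1, smul_eq_mul, mul_one] at h'
      exact h'
    rw [ht, h1, zero_smul] at he2
    simp at he2
  have hA : Rm e1 * Rm e2 = Rm uh := by
    apply ext_mulVec; intro v
    rw [← mulVec_mulVec, R_mulVec e2 v, R_mulVec, R_mulVec]
    simp only [dotProduct_add, dotProduct_neg, dotProduct_smul, smul_eq_mul, h12,
      mul_zero, add_zero, neg_neg, neg_zero, mul_neg]
    have hv := resolve e1 e2 uh he1 he2 huh1 h12 hperp' h2u' v
    linear_combination (norm := module) (2:ℝ) • hv
  have hB : Rm e2 * Rm e1 = Rm uh := by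
    apply ext_mulVec; intro v
    rw [← mulVec_mulVec, R_mulVec e1 v, R_mulVec, R_mulVec]
    simp only [dotProduct_add, dotProduct_neg, dotProduct_smul, smul_eq_mul, h21,
      mul_zero, add_zero, neg_neg, neg_zero, mul_neg]
    have hv := resolve e1 e2 uh he1 he2 huh1 h12 hperp' h2u' v
    linear_combination (norm := module) (2:ℝ) • hv
  have hRu2 : Rm uh * Rm uh = 1 := R_sq uh huh1
  have hcommU : Rm uh * U = U * Rm uh := by
    apply ext_mulVec; intro v
    rw [← mulVec_mulVec, ← mulVec_mulVec, R_mulVec uh (U.mulVec v), R_mulVec uh v,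
      mulVec_add, mulVec_neg, mulVec_smul, heig']
    have hx : uh ⬝ᵥ U.mulVec v = μ * (uh ⬝ᵥ v) := by
      rw [← hsym uh v, heig', smul_dotProduct, smul_eq_mul]
    rw [hx, smul_smul, smul_smul]
    module
  have hmid : Rm uh * U * Rm uh = U := by
    rw [hcommU, mul_assoc, hRu2, mul_one]
  have h1 : Rm e2 = Rm e1 * Rm uh := by
    rw [← hA, ← mul_assoc, R_sq e1 he1, one_mul]
  have h2 : Rm e2 = Rm uh * Rm e1 := by
    rw [← hB, mul_assoc, R_sq e1 he1, mul_one]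
  refine ⟨e2, he2, hind, ?_⟩
  calc Rm e1 * U * Rm e1
      = Rm e1 * (Rm uh * U * Rm uh) * Rm e1 := by rw [hmid]
    _ = (Rm e1 * Rm uh) * U * (Rm uh * Rm e1) := by noncomm_ring
    _ = Rm e2 * U * Rm e2 := by rw [← h1, ← h2]

/-- **Chen–Song–James, Proposition 1 (compound domains).** For `U` symmetric
positive definite, `ê₁` a unit vector and `V = (−I+2ê₁⊗ê₁)U(−I+2ê₁⊗ê₁) ≠ U`:
a second unit vector `ê₂ ∦ ê₁` with `V = (−I+2ê₂⊗ê₂)U(−I+2ê₂⊗ê₂)` exists iff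
`ê₁` is perpendicular to an eigenvector of `U`; moreover in that case
`ê₁ · ê₂ = 0` and `ê₁, ê₂` together with that (normalized) eigenvector form an
orthonormal basis of `ℝ³`. -/
theorem compound_domains_iff
    (U : M3) (hU : U.PosDef)
    (e1 : V3) (he1 : e1 ⬝ᵥ e1 = 1)
    (V : M3)
    (hV : V = (-1 + (2 : ℝ) • outer e1 e1) * U * (-1 + (2 : ℝ) • outer e1 e1))
    (hVU : V ≠ U) :
    ((∃ e2 : V3, e2 ⬝ᵥ e2 = 1 ∧ (¬ ∃ t : ℝ, e2 = t • e1) ∧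
        V = (-1 + (2 : ℝ) • outer e2 e2) * U * (-1 + (2 : ℝ) • outer e2 e2)) ↔
      (∃ (μ : ℝ) (u : V3), u ≠ 0 ∧ U.mulVec u = μ • u ∧ e1 ⬝ᵥ u = 0)) ∧
    (∀ e2 : V3, e2 ⬝ᵥ e2 = 1 → (¬ ∃ t : ℝ, e2 = t • e1) →
      V = (-1 + (2 : ℝ) • outer e2 e2) * U * (-1 + (2 : ℝ) • outer e2 e2) →
      e1 ⬝ᵥ e2 = 0 ∧
      ∃ (μ : ℝ) (u : V3), u ⬝ᵥ u = 1 ∧ U.mulVec u = μ • u ∧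
        e1 ⬝ᵥ u = 0 ∧ e2 ⬝ᵥ u = 0) := by
  have hUt : Uᵀ = U := by
    have h' := hU.1
    rwa [Matrix.IsHermitian, conjTranspose_eq_transpose_of_trivial] at h'
  have hsym : ∀ x y : V3, U.mulVec x ⬝ᵥ y = x ⬝ᵥ U.mulVec y := by
    intro x y
    rw [Matrix.dotProduct_mulVec, ← Matrix.mulVec_transpose, hUt]
  have hV1 : V = Rm e1 * U * Rm e1 := hV
  have hne : Rm e1 * U * Rm e1 ≠ U := by rw [← hV1]; exact hVU
  constructor
  · constructor
    · rintro ⟨e2, h1, h2, h3⟩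
      have h3' : Rm e1 * U * Rm e1 = Rm e2 * U * Rm e2 := by
        rw [← hV1]; exact h3
      obtain ⟨hc0, μ, u, huu, heig, hp1, hp2⟩ := core U hsym e1 e2 he1 h1 h2 h3' hne
      refine ⟨μ, u, ?_, heig, hp1⟩
      intro h0
      rw [h0] at huu
      simp at huu
    · rintro ⟨μ, u, hu, heig, hperp⟩
      obtain ⟨e2, a, b, cc⟩ := bwd U hsym e1 he1 μ u hu heig hperp
      exact ⟨e2, a, b, by rw [hV1, cc]; rfl⟩
  · intro e2 h1 h2 h3
    have h3' : Rm e1 * U * Rm e1 = Rm e2 * U * Rm e2 := by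
      rw [← hV1]; exact h3
    exact core U hsym e1 e2 he1 h1 h2 h3' hne
end
end

section
/- Let U be a symmetric positive-definite real 3×3 matrix with eigenvalues λ₁ < λ₂ = 1 < λ₃, and let ê be a unit vector that is not perpendicular to any eigenvector of U, with V := (−I + 2 ê⊗ê) U (−I + 2 ê⊗ê) ≠ U (so U and V form Type I/II domains and not compound domains). Define the Type-I solution a_I := 2( U^{-1}ê/|U^{-1}ê|² − Uê ), n̂_I := ê, and the Type-II solution a_{II} := Uê, n_{II} := 2( ê − U²ê/|Uê|² ). Then it is not the case that both a_I · (U cof(U²−I)) n̂_I = 0 and a_{II} · (U cof(U²−I)) n_{II} = 0; i.e., the Type-I and Type-II solutions cannot satisfy the second cofactor condition simultaneously (Della Porta). -/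
open Matrix

noncomputable section
set_option maxHeartbeats 1000000

/-- Cofactor matrix of `M` (transpose of the adjugate). -/
def cofMat (M : M3) : M3 := M.adjugate.transpose

/-- **Della Porta.** For Type I/II domains (the twin axis `ê` is not
perpendicular to any eigenvector of `U`), the Type-I and Type-II twin solutions
cannot satisfy the second cofactor condition `a · (U cof(U²−I)) n̂ = 0`
simultaneously. -/
theorem della_porta_CC2_exclusive
    (U : M3) (hU : U.PosDef)
    (l1 l3 : ℝ) (hl1 : l1 < 1) (hl3 : 1 < l3)
    (u1 u2 u3 : V3)
    (hUu1 : U.mulVec u1 = l1 • u1) (hUu2 : U.mulVec u2 = u2)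
    (hUu3 : U.mulVec u3 = l3 • u3)
    (h11 : u1 ⬝ᵥ u1 = 1) (h22 : u2 ⬝ᵥ u2 = 1) (h33 : u3 ⬝ᵥ u3 = 1)
    (h12 : u1 ⬝ᵥ u2 = 0) (h13 : u1 ⬝ᵥ u3 = 0) (h23 : u2 ⬝ᵥ u3 = 0)
    (e : V3) (he : e ⬝ᵥ e = 1)
    (hperp : ∀ (μ : ℝ) (u : V3), u ≠ 0 → U.mulVec u = μ • u → e ⬝ᵥ u ≠ 0)
    (V : M3)
    (hV : V = (-1 + (2 : ℝ) • outer e e) * U * (-1 + (2 : ℝ) • outer e e))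
    (hVU : V ≠ U)
    (aI nI aII nII : V3)
    (haI : aI = (2 : ℝ) •
      ((1 / ((U⁻¹).mulVec e ⬝ᵥ (U⁻¹).mulVec e)) • (U⁻¹).mulVec e - U.mulVec e))
    (hnI : nI = e)
    (haII : aII = U.mulVec e)
    (hnII : nII = (2 : ℝ) •
      (e - (1 / (U.mulVec e ⬝ᵥ U.mulVec e)) • (U * U).mulVec e)) :
    ¬ (aI ⬝ᵥ (U * cofMat (U * U - 1)).mulVec nI = 0 ∧
       aII ⬝ᵥ (U * cofMat (U * U - 1)).mulVec nII = 0) := by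
  rintro ⟨hI, hII⟩
  classical
  set s : ℝ := (U⁻¹).mulVec e ⬝ᵥ (U⁻¹).mulVec e with hsdef
  set t : ℝ := U.mulVec e ⬝ᵥ U.mulVec e with htdef
  -- nonzero eigenvectors
  have hu1ne : u1 ≠ 0 := fun h => by simp [h] at h11
  have hu2ne : u2 ≠ 0 := fun h => by simp [h] at h22
  have hu3ne : u3 ≠ 0 := fun h => by simp [h] at h33
  -- positive eigenvalues
  have hl1pos : 0 < l1 := by
    have h := hU.dotProduct_mulVec_pos hu1ne
    rw [hUu1] at h
    simpa [dotProduct_smul, smul_eq_mul, h11] using h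
  have hl3pos : 0 < l3 := by
    have h := hU.dotProduct_mulVec_pos hu3ne
    rw [hUu3] at h
    simpa [dotProduct_smul, smul_eq_mul, h33] using h
  have hl1ne : l1 ≠ 0 := ne_of_gt hl1pos
  have hl3ne : l3 ≠ 0 := ne_of_gt hl3pos
  -- components of e
  have hc1 : u1 ⬝ᵥ e ≠ 0 := by
    rw [dotProduct_comm]; exact hperp l1 u1 hu1ne hUu1
  have hc2 : u2 ⬝ᵥ e ≠ 0 := by
    rw [dotProduct_comm]; exact hperp 1 u2 hu2ne (by rw [one_smul]; exact hUu2)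
  have hc3 : u3 ⬝ᵥ e ≠ 0 := by
    rw [dotProduct_comm]; exact hperp l3 u3 hu3ne hUu3
  -- the orthogonal matrix with rows u1 u2 u3
  set R : M3 := Matrix.of ![u1, u2, u3] with hRdef
  have hRRt : R * Rᵀ = 1 := by
    have h11' := h11; have h22' := h22; have h33' := h33
    have h12' := h12; have h13' := h13; have h23' := h23
    simp only [dotProduct, Fin.sum_univ_three] at h11' h22' h33' h12' h13' h23'
    ext i j
    fin_cases i <;> fin_cases j <;>
      simp [hRdef, Matrix.mul_apply, Matrix.transpose_apply, Fin.sum_univ_three,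
        Matrix.one_apply, -Matrix.cons_transpose] <;>
      first
        | linear_combination h11' | linear_combination h22' | linear_combination h33'
        | linear_combination h12' | linear_combination h13' | linear_combination h23'
  have hRtR : Rᵀ * R = 1 := mul_eq_one_comm.mp hRRt
  -- the quadratic-form evaluation lemma
  have key : ∀ (g : Fin 3 → ℝ) (a n : V3),
      a ⬝ᵥ (Rᵀ * Matrix.diagonal g * R).mulVec n
        = g 0 * (u1 ⬝ᵥ a) * (u1 ⬝ᵥ n) + g 1 * (u2 ⬝ᵥ a) * (u2 ⬝ᵥ n)
          + g 2 * (u3 ⬝ᵥ a) * (u3 ⬝ᵥ n) := by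
    intro g a n
    simp [hRdef, Matrix.mulVec, Matrix.mul_apply, Matrix.transpose_apply, dotProduct,
      Fin.sum_univ_three, Matrix.diagonal, -Matrix.cons_transpose]
    ring
  -- eigendecomposition of U
  have hu1p : ∀ i, U i 0 * u1 0 + U i 1 * u1 1 + U i 2 * u1 2 = l1 * u1 i := by
    intro i
    simpa [Matrix.mulVec, dotProduct, Fin.sum_univ_three] using congrFun hUu1 i
  have hu2p : ∀ i, U i 0 * u2 0 + U i 1 * u2 1 + U i 2 * u2 2 = u2 i := by
    intro i
    simpa [Matrix.mulVec, dotProduct, Fin.sum_univ_three] using congrFun hUu2 i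
  have hu3p : ∀ i, U i 0 * u3 0 + U i 1 * u3 1 + U i 2 * u3 2 = l3 * u3 i := by
    intro i
    simpa [Matrix.mulVec, dotProduct, Fin.sum_univ_three] using congrFun hUu3 i
  have hUR : U * Rᵀ = Rᵀ * Matrix.diagonal ![l1, 1, l3] := by
    ext i j
    fin_cases j <;>
      simp [hRdef, Matrix.mul_apply, Matrix.transpose_apply, Fin.sum_univ_three,
        Matrix.diagonal, -Matrix.cons_transpose] <;>
      first
        | linear_combination hu1p i | linear_combination hu2p i | linear_combination hu3p i
  have hUdec : U = Rᵀ * Matrix.diagonal ![l1, 1, l3] * R := by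
    calc U = U * (Rᵀ * R) := by rw [hRtR, mul_one]
    _ = (U * Rᵀ) * R := by rw [Matrix.mul_assoc]
    _ = _ := by rw [hUR]
  -- conjugation multiplication rule
  have hconj : ∀ g g' : Fin 3 → ℝ,
      (Rᵀ * Matrix.diagonal g * R) * (Rᵀ * Matrix.diagonal g' * R)
        = Rᵀ * Matrix.diagonal (fun i => g i * g' i) * R := by
    intro g g'
    have h1 : R * (Rᵀ * Matrix.diagonal g' * R) = Matrix.diagonal g' * R := by
      rw [← Matrix.mul_assoc, ← Matrix.mul_assoc, hRRt, one_mul]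
    rw [Matrix.mul_assoc (Rᵀ * Matrix.diagonal g) R _, h1, ← Matrix.mul_assoc,
      Matrix.mul_assoc Rᵀ (Matrix.diagonal g) (Matrix.diagonal g'),
      Matrix.diagonal_mul_diagonal]
  have hone : Rᵀ * Matrix.diagonal (fun _ : Fin 3 => (1:ℝ)) * R = 1 := by
    rw [show (Matrix.diagonal fun _ : Fin 3 => (1:ℝ)) = 1 from Matrix.diagonal_one,
      mul_one, hRtR]
  -- U²
  have hU2 : U * U = Rᵀ * Matrix.diagonal ![l1*l1, 1, l3*l3] * R := by
    rw [hUdec, hconj,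
      show (fun i => (![l1,1,l3] : Fin 3 → ℝ) i * ![l1,1,l3] i) = ![l1*l1, 1, l3*l3] from by
        funext i; fin_cases i <;> norm_num]
  have hM : U * U - 1 = Rᵀ * Matrix.diagonal ![l1*l1-1, 0, l3*l3-1] * R := by
    rw [hU2, show (1 : M3) = (Rᵀ * Matrix.diagonal (fun _ : Fin 3 => (1:ℝ))) * R from hone.symm,
      ← sub_mul, ← mul_sub, Matrix.diagonal_sub]
    congr 2
    ext i j
    fin_cases i <;> fin_cases j <;> simp [Matrix.diagonal_apply] <;> norm_num
  -- determinant and adjugate of R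
  have hdetR : R.det * R.det = 1 := by
    have h := congrArg Matrix.det hRRt
    rwa [Matrix.det_mul, Matrix.det_transpose, Matrix.det_one] at h
  have hadjR : adjugate R = R.det • Rᵀ := by
    calc adjugate R = (Rᵀ * R) * adjugate R := by rw [hRtR, one_mul]
    _ = Rᵀ * (R * adjugate R) := by rw [Matrix.mul_assoc]
    _ = Rᵀ * (R.det • 1) := by rw [Matrix.mul_adjugate]
    _ = R.det • Rᵀ := by rw [Matrix.mul_smul, mul_one]
  have hadjRt : adjugate Rᵀ = R.det • R := by
    rw [← Matrix.adjugate_transpose, hadjR, Matrix.transpose_smul, Matrix.transpose_transpose]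
  set k : ℝ := (l1*l1-1)*(l3*l3-1) with hk
  have hP : (Matrix.diagonal fun i => ∏ j ∈ Finset.univ.erase i, (![l1*l1-1, 0, l3*l3-1]) j)
      = Matrix.diagonal ![0, k, 0] := by
    have hvec : (fun i : Fin 3 => ∏ j ∈ Finset.univ.erase i, (![l1*l1-1, 0, l3*l3-1]) j)
        = ![0, k, 0] := by
      funext i
      fin_cases i <;>
        simp [show (Finset.univ.erase (0 : Fin 3)) = {1, 2} from by decide,
          show (Finset.univ.erase (1 : Fin 3)) = {0, 2} from by decide,
          show (Finset.univ.erase (2 : Fin 3)) = {0, 1} from by decide,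
          Finset.prod_insert, Finset.prod_singleton, hk]
    rw [hvec]
  have hadjM : adjugate (U * U - 1) = Rᵀ * Matrix.diagonal ![0, k, 0] * R := by
    rw [hM, Matrix.adjugate_mul_distrib, Matrix.adjugate_mul_distrib, hadjR, hadjRt,
      Matrix.adjugate_diagonal, hP]
    simp only [smul_mul_assoc, mul_smul_comm, smul_smul]
    rw [hdetR, one_smul, Matrix.mul_assoc]
  have hcof : cofMat (U * U - 1) = Rᵀ * Matrix.diagonal ![0, k, 0] * R := by
    rw [cofMat, hadjM, Matrix.transpose_mul, Matrix.transpose_mul,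
      Matrix.transpose_transpose, Matrix.diagonal_transpose, ← Matrix.mul_assoc]
  have hA : U * cofMat (U * U - 1) = Rᵀ * Matrix.diagonal ![0, k, 0] * R := by
    rw [hcof, hUdec, hconj,
      show (fun i => (![l1,1,l3] : Fin 3 → ℝ) i * (![0,k,0] : Fin 3 → ℝ) i)
          = ![0, k, 0] from by funext i; fin_cases i <;> norm_num]
  -- inverse of U
  have hUinv : U⁻¹ = Rᵀ * Matrix.diagonal ![l1⁻¹, 1, l3⁻¹] * R := by
    apply Matrix.inv_eq_left_inv
    rw [hUdec]
    rw [hconj,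
      show (fun i => (![l1⁻¹,1,l3⁻¹] : Fin 3 → ℝ) i * (![l1,1,l3] : Fin 3 → ℝ) i)
          = fun _ : Fin 3 => (1:ℝ) from by
        funext i; fin_cases i <;>
          simp [inv_mul_cancel₀ hl1ne, inv_mul_cancel₀ hl3ne], hone]
  -- symmetric quadratic form identity
  have hBtB : ∀ (B : M3) (v : V3), v ⬝ᵥ (Bᵀ * B).mulVec v = B.mulVec v ⬝ᵥ B.mulVec v := by
    intro B v
    rw [Matrix.dotProduct_mulVec, ← Matrix.vecMul_vecMul, Matrix.vecMul_transpose,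
      ← Matrix.dotProduct_mulVec]
  -- coordinates of s, t and 1
  have hUinvT : (Rᵀ * Matrix.diagonal ![l1⁻¹, 1, l3⁻¹] * R)ᵀ
      = Rᵀ * Matrix.diagonal ![l1⁻¹, 1, l3⁻¹] * R := by
    rw [Matrix.transpose_mul, Matrix.transpose_mul, Matrix.transpose_transpose,
      Matrix.diagonal_transpose, ← Matrix.mul_assoc]
  have hscoord : s = l1⁻¹*l1⁻¹ * ((u1 ⬝ᵥ e) * (u1 ⬝ᵥ e)) + (u2 ⬝ᵥ e) * (u2 ⬝ᵥ e)
      + l3⁻¹*l3⁻¹ * ((u3 ⬝ᵥ e) * (u3 ⬝ᵥ e)) := by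
    rw [hsdef, ← hBtB, hUinv, hUinvT, hconj,
      show (fun i => (![l1⁻¹,1,l3⁻¹] : Fin 3 → ℝ) i * (![l1⁻¹,1,l3⁻¹] : Fin 3 → ℝ) i)
          = ![l1⁻¹*l1⁻¹, 1, l3⁻¹*l3⁻¹] from by funext i; fin_cases i <;> norm_num, key]
    norm_num
    simp only [Matrix.cons_val_two, Matrix.tail_cons, Matrix.head_cons]
    ring
  have hUT : U ᵀ = U := by
    nth_rewrite 1 [hUdec]
    rw [Matrix.transpose_mul, Matrix.transpose_mul, Matrix.transpose_transpose,
      Matrix.diagonal_transpose, ← Matrix.mul_assoc, ← hUdec]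
  have htcoord : t = l1*l1 * ((u1 ⬝ᵥ e) * (u1 ⬝ᵥ e)) + (u2 ⬝ᵥ e) * (u2 ⬝ᵥ e)
      + l3*l3 * ((u3 ⬝ᵥ e) * (u3 ⬝ᵥ e)) := by
    rw [htdef, ← hBtB, hUT, hU2, key]
    norm_num
    simp only [Matrix.cons_val_two, Matrix.tail_cons, Matrix.head_cons]
    ring
  have hnorm : (u1 ⬝ᵥ e) * (u1 ⬝ᵥ e) + (u2 ⬝ᵥ e) * (u2 ⬝ᵥ e) + (u3 ⬝ᵥ e) * (u3 ⬝ᵥ e) = 1 := by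
    have h := key (fun _ : Fin 3 => (1:ℝ)) e e
    rw [hone, Matrix.one_mulVec, he] at h
    linarith [h]
  -- dot products with u2
  have h32 : u3 ⬝ᵥ u2 = 0 := by rw [dotProduct_comm]; exact h23
  have du2Uinv : u2 ⬝ᵥ (U⁻¹).mulVec e = u2 ⬝ᵥ e := by
    rw [hUinv, key]
    simp [h12, h22, h32]
  have du2U : u2 ⬝ᵥ U.mulVec e = u2 ⬝ᵥ e := by
    nth_rewrite 1 [hUdec]
    rw [key]
    simp [h12, h22, h32]
  have du2U2 : u2 ⬝ᵥ (U * U).mulVec e = u2 ⬝ᵥ e := by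
    rw [hU2, key]
    simp [h12, h22, h32]
  -- k is nonzero
  have hkneg : k < 0 := by
    rw [hk]
    have e1 : l1 * l1 < 1 := by
      have := mul_lt_mul'' hl1 hl1 hl1pos.le hl1pos.le
      simpa using this
    have e2 : (1:ℝ) < l3 * l3 := by
      have := mul_lt_mul'' hl3 hl3 zero_le_one zero_le_one
      simpa using this
    exact mul_neg_of_neg_of_pos (by linarith) (by linarith)
  have hkne : k ≠ 0 := ne_of_lt hkneg
  -- evaluate CC2 for type I
  rw [hA, key, hnI] at hI
  have hu2aI : u2 ⬝ᵥ aI = 2 * ((1/s) * (u2 ⬝ᵥ e) - (u2 ⬝ᵥ e)) := by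
    rw [haI]
    simp [dotProduct_smul, dotProduct_sub, smul_eq_mul, du2Uinv, du2U]
  rw [hu2aI] at hI
  simp only [Matrix.cons_val_zero, Matrix.cons_val_one, Matrix.head_cons,
    Matrix.cons_val_two, Matrix.tail_cons, zero_mul, one_mul, mul_zero, zero_add,
    add_zero] at hI
  -- hI : k * (2 * ((1/s) * c2 - c2)) * c2 = 0
  have hs1 : s = 1 := by
    have h2 : (1/s) * (u2 ⬝ᵥ e) - (u2 ⬝ᵥ e) = 0 := by
      have := mul_eq_zero.mp hI
      rcases this with h | h
      · rcases mul_eq_zero.mp h with h' | h'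
        · exact absurd h' hkne
        · linarith
      · exact absurd h hc2
    have h3 : (1/s) = 1 := by
      have h4 : (1/s) * (u2 ⬝ᵥ e) = 1 * (u2 ⬝ᵥ e) := by linarith
      exact mul_right_cancel₀ hc2 h4
    have hsne : s ≠ 0 := by
      intro h0; rw [h0] at h3; norm_num at h3
    field_simp at h3
    linarith
  -- evaluate CC2 for type II
  rw [hA, key, haII, du2U] at hII
  have hu2nII : u2 ⬝ᵥ nII = 2 * ((u2 ⬝ᵥ e) - (1/t) * (u2 ⬝ᵥ e)) := by
    rw [hnII]
    simp [dotProduct_smul, dotProduct_sub, smul_eq_mul, du2U2]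
  rw [hu2nII] at hII
  simp only [Matrix.cons_val_zero, Matrix.cons_val_one, Matrix.head_cons,
    Matrix.cons_val_two, Matrix.tail_cons, zero_mul, one_mul, mul_zero, zero_add,
    add_zero] at hII
  have ht1 : t = 1 := by
    have h2 : (u2 ⬝ᵥ e) - (1/t) * (u2 ⬝ᵥ e) = 0 := by
      have := mul_eq_zero.mp hII
      rcases this with h | h
      · rcases mul_eq_zero.mp h with h' | h'
        · exact absurd h' hkne
        · exact absurd h' hc2
      · linarith
    have h3 : (1/t) = 1 := by
      have h4 : (1/t) * (u2 ⬝ᵥ e) = 1 * (u2 ⬝ᵥ e) := by linarith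
      exact mul_right_cancel₀ hc2 h4
    have htne : t ≠ 0 := by
      intro h0; rw [h0] at h3; norm_num at h3
    field_simp at h3
    linarith
  -- final contradiction
  rw [hs1] at hscoord
  rw [ht1] at htcoord
  set x := (u1 ⬝ᵥ e) * (u1 ⬝ᵥ e) with hx
  set y := (u3 ⬝ᵥ e) * (u3 ⬝ᵥ e) with hy
  set z := (u2 ⬝ᵥ e) * (u2 ⬝ᵥ e) with hz
  have hxpos : 0 < x := by rw [hx]; exact mul_self_pos.mpr hc1
  have hypos : 0 < y := by rw [hy]; exact mul_self_pos.mpr hc3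
  have hinv1 : l1 * l1⁻¹ = 1 := mul_inv_cancel₀ hl1ne
  have hinv3 : l3 * l3⁻¹ = 1 := mul_inv_cancel₀ hl3ne
  have F1 : x * (1 - l1*l1) = y * (l3*l3 - 1) := by
    linear_combination hnorm + htcoord
  have E2 : l3*l3*x + l1*l1*l3*l3*z + l1*l1*y = l1*l1*l3*l3 := by
    field_simp at hscoord
    linear_combination -hscoord
  have F2 : x * (l3*l3) * (1 - l1*l1) = y * (l1*l1) * (l3*l3 - 1) := by
    linear_combination E2 - (l1*l1*l3*l3) * hnorm
  have hkey : y * (l3*l3 - 1) * (l3*l3 - l1*l1) = 0 := by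
    linear_combination F2 - (l3*l3) * F1
  have e1 : l1 * l1 < 1 := by
    have := mul_lt_mul'' hl1 hl1 hl1pos.le hl1pos.le
    simpa using this
  have e2 : (1:ℝ) < l3 * l3 := by
    have := mul_lt_mul'' hl3 hl3 zero_le_one zero_le_one
    simpa using this
  have hpos : 0 < y * (l3*l3 - 1) * (l3*l3 - l1*l1) :=
    mul_pos (mul_pos hypos (by linarith)) (by linarith)
  linarith
end
end

section
/- For all real numbers a, b, c, d, let U₁ := [[d,0,0],[0,a,b],[0,b,c]] and U₁₂ := [[d,0,0],[0,c,−b],[0,−b,a]] (the non-conventional twin pair of the cubic-to-monoclinic-II transformation). Then U₁ U₁₂ = U₁₂ U₁, and there exists a unit vector ê ∈ ℝ³ with ê · e₁ = 0 (where e₁ = (1,0,0)) such that (−I + 2 ê⊗ê) U₁ (−I + 2 ê⊗ê) = U₁₂. -/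
open Matrix

noncomputable section

lemma key (a b c d x y : ℝ) (hxy : x ^ 2 + y ^ 2 = 1)
    (hH : (a - c) * (x ^ 2 - y ^ 2) + 4 * b * x * y = 0) :
    ∃ e : V3, e ⬝ᵥ e = 1 ∧ e ⬝ᵥ ![1, 0, 0] = 0 ∧
      (-1 + (2 : ℝ) • outer e e) * !![d, 0, 0; 0, a, b; 0, b, c] *
        (-1 + (2 : ℝ) • outer e e) = !![d, 0, 0; 0, c, -b; 0, -b, a] := by
  refine ⟨![0, x, y], ?_, ?_, ?_⟩
  · simp [dotProduct, Fin.sum_univ_three, Matrix.vecHead, Matrix.vecTail]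
    linear_combination hxy
  · simp [dotProduct, Fin.sum_univ_three, Matrix.vecHead, Matrix.vecTail]
  · ext i j
    fin_cases i <;> fin_cases j <;>
      simp [Matrix.mul_apply, Fin.sum_univ_three, outer, Matrix.vecMulVec_apply,
        Matrix.add_apply, Matrix.neg_apply, Matrix.one_apply, Matrix.smul_apply,
        Matrix.vecHead, Matrix.vecTail]
    · linear_combination (x^2 - y^2) * hH +
        (c*(x^2+y^2+1) + 2*a*(x^2-y^2) + a*(x^2+y^2-1) + 4*b*x*y) * hxy
    · linear_combination (2*x*y) * hH + ((a+c)*2*x*y - 2*b) * hxy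
    · linear_combination (2*x*y) * hH + ((a+c)*2*x*y - 2*b) * hxy
    · linear_combination (y^2 - x^2) * hH +
        (a*(x^2+y^2+1) + 4*b*x*y - 2*c*(x^2-y^2) + c*(x^2+y^2-1)) * hxy

/-- The non-conventional twin pair `(U₁, U₁₂)` of the cubic-to-monoclinic-II
transformation commutes, and the two variants are related by a 180° rotation
about a unit vector `ê` perpendicular to `e₁ = (1,0,0)`. -/
theorem nonconventional_pair_commutes_and_is_domain
    (a b c d : ℝ) (U1 U12 : M3)
    (hU1 : U1 = !![d, 0, 0; 0, a, b; 0, b, c])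
    (hU12 : U12 = !![d, 0, 0; 0, c, -b; 0, -b, a]) :
    U1 * U12 = U12 * U1 ∧
    ∃ e : V3, e ⬝ᵥ e = 1 ∧ e ⬝ᵥ ![1, 0, 0] = 0 ∧
      (-1 + (2 : ℝ) • outer e e) * U1 * (-1 + (2 : ℝ) • outer e e) = U12 := by
  subst hU1 hU12
  constructor
  · ext i j
    fin_cases i <;> fin_cases j <;>
      simp [Matrix.mul_apply, Fin.sum_univ_three, Matrix.vecHead, Matrix.vecTail] <;> ring
  · set s : ℝ := Real.sqrt ((2*b)^2 + (c-a)^2) with hs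
    have hsnn : (0:ℝ) ≤ (2*b)^2 + (c-a)^2 := by positivity
    have hs2 : s ^ 2 = (2*b)^2 + (c-a)^2 := Real.sq_sqrt hsnn
    have hsnn' : 0 ≤ s := Real.sqrt_nonneg _
    by_cases h : s + 2*b = 0
    · -- degenerate: 2b = -s ≤ 0 and c = a; use e = (0,0,1)
      have hca' : c = a := by nlinarith [sq_nonneg (c-a)]
      exact key a b c d 0 1 (by norm_num) (by rw [hca']; ring)
    · have hsb : 0 < s + 2*b := by
        rcases lt_or_eq_of_le hsnn' with hs0 | hs0
        · have habs : |2*b| ≤ s := by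
            rw [← Real.sqrt_sq_eq_abs]
            exact Real.sqrt_le_sqrt (by nlinarith)
          rcases abs_le.mp habs with ⟨h1, _⟩
          rcases lt_or_eq_of_le (by linarith : 0 ≤ s + 2*b) with h2 | h2
          · exact h2
          · exact absurd h2.symm h
        · exfalso
          have hb0 : 2*b = 0 := by nlinarith [sq_nonneg (2*b), sq_nonneg (c-a)]
          exact h (by rw [← hs0]; linarith)
      have hs0 : 0 < s := by nlinarith [sq_nonneg (s - 2*b)]
      set x : ℝ := Real.sqrt ((s + 2*b)/(2*s)) with hxdef
      have hx2 : x ^ 2 = (s + 2*b)/(2*s) := Real.sq_sqrt (by positivity)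
      have hx0 : 0 < x := Real.sqrt_pos.mpr (by positivity)
      have hx2' : 2*s*x^2 = s + 2*b := by
        rw [hx2]; field_simp
      set y : ℝ := (c-a)/(2*s*x) with hydef
      have hv' : s*(2*x*y) = c - a := by
        rw [hydef]; field_simp
      have hy2' : (2*s*(s+2*b))*y^2 = (c-a)^2 := by
        have h2sx : (2*s*x)^2 = 2*s*(s+2*b) := by linear_combination 2*s*hx2'
        rw [hydef, div_pow, h2sx]
        field_simp
      have hxy : x ^ 2 + y ^ 2 = 1 := by
        have key1 : (2*s*(s+2*b))*(x^2+y^2) = (2*s*(s+2*b))*1 := by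
          linear_combination (s+2*b)*hx2' + hy2' - hs2
        exact mul_left_cancel₀ (by positivity) key1
      have hu' : s*(x^2-y^2) = 2*b := by
        linear_combination hx2' - s*hxy
      refine key a b c d x y hxy ?_
      have Hs : s*((a-c)*(x^2-y^2) + 4*b*x*y) = s * 0 := by
        linear_combination (a-c)*hu' + 2*b*hv'
      exact mul_left_cancel₀ hs0.ne' Hs
end
end

section
/- Let U, V be symmetric positive-definite real 3×3 matrices with U ≠ V, U V = V U, and V = R U R^T for some R ∈ SO(3). Suppose the eigenvalues of U are λ₁ < λ₂ = 1 < λ₃ with 1/√2 < λ₁ < 1 and λ₃ = λ₁/√(2λ₁² − 1), and suppose U and V have a common unit eigenvector û₂ for the eigenvalue 1 (U û₂ = û₂ = V û₂). Then there exist rotations R_u⁺, R_v⁺, R_u⁻, R_v⁻ ∈ SO(3), nonzero vectors b⁺, b⁻ ∈ ℝ³ and unit vectors m̂_u⁺, m̂_v⁺, m̂_u⁻, m̂_v⁻ ∈ ℝ³ such that R_u⁺ U − I = b⁺ ⊗ m̂_u⁺, R_v⁺ V − I = b⁺ ⊗ m̂_v⁺, R_u⁻ U − I = b⁻ ⊗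 m̂_u⁻, R_v⁻ V − I = −b⁻ ⊗ m̂_v⁻, and b⁺ is not parallel to b⁻ (two distinct planar triple clusters of the first kind). -/
open Matrix

noncomputable section

private lemma conj_mul' {P Pt A B : M3} (h : P * Pt = 1) :
    (Pt * A * P) * (Pt * B * P) = Pt * (A * B) * P := by
  have e : Pt * A * P * (Pt * B * P) = Pt * A * (P * Pt) * (B * P) := by
    simp only [Matrix.mul_assoc]
  rw [e, h, Matrix.mul_one]
  simp only [Matrix.mul_assoc]

private lemma outer_conj (P : M3) (b m : V3) :
    Pᵀ * outer b m * P = outer (Pᵀ.mulVec b) (Pᵀ.mulVec m) := by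
  ext i j
  simp [outer, Matrix.mul_apply, Matrix.vecMulVec_apply, Matrix.mulVec, dotProduct,
    Fin.sum_univ_three]
  ring

set_option maxHeartbeats 1600000 in
/-- **Triple clusters of the first kind.** If `U ≠ V` commute, are symmetry
related, have eigenvalues `λ₁ < 1 < λ₃` with `1/√2 < λ₁ < 1`,
`λ₃ = λ₁/√(2λ₁²−1)`, and a common unit eigenvector `û₂` for the eigenvalue 1,
then there exist two distinct planar triple clusters with parallel shear
vectors: `R_u⁺U − I = b⁺⊗m̂_u⁺`, `R_v⁺V − I = b⁺⊗m̂_v⁺`,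
`R_u⁻U − I = b⁻⊗m̂_u⁻`, `R_v⁻V − I = −b⁻⊗m̂_v⁻`, with `b⁺ ∦ b⁻`. -/
theorem triple_clusters_first_kind
    (U V : M3) (hU : U.PosDef) (hV : V.PosDef) (hUV : U ≠ V)
    (hcomm : U * V = V * U)
    (R : M3) (hR : SO3 R) (hVrel : V = R * U * R.transpose)
    (l1 l3 : ℝ)
    (hl1lo : 1 / Real.sqrt 2 < l1) (hl1 : l1 < 1) (hl3 : 1 < l3)
    (hl3eq : l3 = l1 / Real.sqrt (2 * l1 ^ 2 - 1))
    (u1 u2 u3 : V3)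
    (hUu1 : U.mulVec u1 = l1 • u1) (hUu2 : U.mulVec u2 = u2)
    (hUu3 : U.mulVec u3 = l3 • u3)
    (hn1 : u1 ⬝ᵥ u1 = 1) (hn2 : u2 ⬝ᵥ u2 = 1) (hn3 : u3 ⬝ᵥ u3 = 1)
    (ho12 : u1 ⬝ᵥ u2 = 0) (ho13 : u1 ⬝ᵥ u3 = 0) (ho23 : u2 ⬝ᵥ u3 = 0)
    (hVu2 : V.mulVec u2 = u2) :
    ∃ (Rup Rvp Rum Rvm : M3) (bp bm mup mvp mum mvm : V3),
      SO3 Rup ∧ SO3 Rvp ∧ SO3 Rum ∧ SO3 Rvm ∧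
      bp ≠ 0 ∧ bm ≠ 0 ∧
      mup ⬝ᵥ mup = 1 ∧ mvp ⬝ᵥ mvp = 1 ∧ mum ⬝ᵥ mum = 1 ∧ mvm ⬝ᵥ mvm = 1 ∧
      Rup * U - 1 = outer bp mup ∧
      Rvp * V - 1 = outer bp mvp ∧
      Rum * U - 1 = outer bm mum ∧
      Rvm * V - 1 = - outer bm mvm ∧
      ¬ ∃ t : ℝ, bm = t • bp := by
  obtain ⟨hRtR, hRdet⟩ := hR
  have hRRt : R * Rᵀ = 1 := mul_eq_one_comm.mp hRtR
  -- ## scalar preliminaries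
  have hs2 : (0:ℝ) < Real.sqrt 2 := by positivity
  have hl1pos : 0 < l1 := lt_trans (by positivity) hl1lo
  have hl3pos : 0 < l3 := by linarith
  have h1' : 1 < l1 * Real.sqrt 2 := by
    rw [div_lt_iff₀ hs2] at hl1lo; linarith
  have h2l1 : 0 < 2 * l1 ^ 2 - 1 := by
    nlinarith [Real.sq_sqrt (by norm_num : (0:ℝ) ≤ 2)]
  have hl3sq : l3 ^ 2 = l1 ^ 2 / (2 * l1 ^ 2 - 1) := by
    rw [hl3eq, div_pow, Real.sq_sqrt h2l1.le]
  have hkey : l1 ^ 2 * (l3 ^ 2 - 1) = l3 ^ 2 * (1 - l1 ^ 2) := by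
    rw [hl3sq]; rw [div_sub_one h2l1.ne', mul_div_assoc', div_mul_eq_mul_div, div_eq_div_iff h2l1.ne' h2l1.ne']; ring
  have hk1 : 0 < 1 - l1 ^ 2 := by nlinarith
  have hk3 : 0 < l3 ^ 2 - 1 := by nlinarith
  have hSpos : 0 < l3 ^ 2 - l1 ^ 2 := by nlinarith
  have hL : 0 < l1 + l3 := by linarith
  have hLne : l1 + l3 ≠ 0 := ne_of_gt hL
  set s1 : ℝ := Real.sqrt (1 - l1 ^ 2) with hs1def
  set s3 : ℝ := Real.sqrt (l3 ^ 2 - 1) with hs3def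
  set sS : ℝ := Real.sqrt (l3 ^ 2 - l1 ^ 2) with hsSdef
  have hs1 : s1 ^ 2 = 1 - l1 ^ 2 := Real.sq_sqrt hk1.le
  have hs3 : s3 ^ 2 = l3 ^ 2 - 1 := Real.sq_sqrt hk3.le
  have hsS : sS ^ 2 = l3 ^ 2 - l1 ^ 2 := Real.sq_sqrt hSpos.le
  have hs1p : 0 < s1 := Real.sqrt_pos.mpr hk1
  have hs3p : 0 < s3 := Real.sqrt_pos.mpr hk3
  have hsSp : 0 < sS := Real.sqrt_pos.mpr hSpos
  have hsSne : sS ≠ 0 := ne_of_gt hsSp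
  have hgid : l3 * s1 = l1 * s3 := by
    have e1 : l3 * s1 = Real.sqrt (l3 ^ 2 * (1 - l1 ^ 2)) := by
      rw [Real.sqrt_mul (by positivity), Real.sqrt_sq hl3pos.le, hs1def]
    have e2 : l1 * s3 = Real.sqrt (l1 ^ 2 * (l3 ^ 2 - 1)) := by
      rw [Real.sqrt_mul (by positivity), Real.sqrt_sq hl1pos.le, hs3def]
    rw [e1, e2, hkey]
  -- ## orthonormal eigenbasis matrix
  obtain ⟨P, hPdef⟩ : ∃ x : M3, x = Matrix.of ![u1, u2, u3] := ⟨_, rfl⟩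
  simp only [dotProduct, Fin.sum_univ_three] at hn1 hn2 hn3 ho12 ho13 ho23
  have hPPt : P * Pᵀ = 1 := by
    ext i j
    fin_cases i <;> fin_cases j <;>
      simp [hPdef, Matrix.mul_apply, Matrix.transpose_apply, Matrix.one_apply,
        Fin.sum_univ_three, Matrix.vecHead, Matrix.vecTail] <;>
      linarith [hn1, hn2, hn3, ho12, ho13, ho23]
  have hPtP : Pᵀ * P = 1 := mul_eq_one_comm.mp hPPt
  have hdetP : P.det * P.det = 1 := by
    have := congrArg Matrix.det hPPt
    rwa [Matrix.det_mul, Matrix.det_transpose, Matrix.det_one] at this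
  obtain ⟨D, hDdef⟩ : ∃ x : M3, x = !![l1,0,0;0,1,0;0,0,l3] := ⟨_, rfl⟩
  set D' : M3 := !![l3,0,0;0,1,0;0,0,l1] with hD'def
  -- ## U = Pᵀ D P
  have e1 : ∀ i, U i 0 * u1 0 + U i 1 * u1 1 + U i 2 * u1 2 = l1 * u1 i := fun i => by
    have := congrFun hUu1 i; simpa [Matrix.mulVec, dotProduct, Fin.sum_univ_three] using this
  have e2 : ∀ i, U i 0 * u2 0 + U i 1 * u2 1 + U i 2 * u2 2 = u2 i := fun i => by
    have := congrFun hUu2 i; simpa [Matrix.mulVec, dotProduct, Fin.sum_univ_three] using this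
  have e3 : ∀ i, U i 0 * u3 0 + U i 1 * u3 1 + U i 2 * u3 2 = l3 * u3 i := fun i => by
    have := congrFun hUu3 i; simpa [Matrix.mulVec, dotProduct, Fin.sum_univ_three] using this
  have hUPt : U * Pᵀ = Pᵀ * D := by
    ext i j
    fin_cases i <;> fin_cases j <;>
      simp [hPdef, hDdef, Matrix.mul_apply, Matrix.transpose_apply, Fin.sum_univ_three,
        Matrix.vecHead, Matrix.vecTail] <;>
      linarith [e1 0, e1 1, e1 2, e2 0, e2 1, e2 2, e3 0, e3 1, e3 2]
  have hUPDP : U = Pᵀ * D * P := by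
    calc U = U * (Pᵀ * P) := by rw [hPtP, Matrix.mul_one]
    _ = (U * Pᵀ) * P := by rw [Matrix.mul_assoc]
    _ = Pᵀ * D * P := by rw [hUPt]
  -- ## V = Pᵀ D' P
  obtain ⟨M, hMdef⟩ : ∃ x : M3, x = P * V * Pᵀ := ⟨_, rfl⟩
  have hVM : V = Pᵀ * M * P := by
    rw [hMdef]
    calc V = (Pᵀ * P) * V * (Pᵀ * P) := by rw [hPtP]; simp [Matrix.mul_assoc]
    _ = Pᵀ * (P * V * Pᵀ) * P := by simp only [Matrix.mul_assoc]
  have hPUPt : P * U * Pᵀ = D := by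
    rw [hUPDP]
    calc P * (Pᵀ * D * P) * Pᵀ = (P * Pᵀ) * D * (P * Pᵀ) := by simp only [Matrix.mul_assoc]
    _ = D := by rw [hPPt]; simp
  have hDM : D * M = M * D := by
    rw [← hPUPt, hMdef]
    calc (P * U * Pᵀ) * (P * V * Pᵀ) = P * (U * (Pᵀ * P) * V) * Pᵀ := by
          simp only [Matrix.mul_assoc]
    _ = P * (U * V) * Pᵀ := by rw [hPtP]; simp [Matrix.mul_assoc]
    _ = P * (V * U) * Pᵀ := by rw [hcomm]
    _ = P * (V * (Pᵀ * P) * U) * Pᵀ := by rw [hPtP]; simp [Matrix.mul_assoc]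
    _ = (P * V * Pᵀ) * (P * U * Pᵀ) := by simp only [Matrix.mul_assoc]
  have hcm : ∀ i j, D i i * M i j = M i j * D j j := by
    intro i j
    have := congrFun (congrFun hDM i) j
    fin_cases i <;> fin_cases j <;>
      simpa [hDdef, Matrix.mul_apply, Fin.sum_univ_three, Matrix.vecHead, Matrix.vecTail]
        using this
  have hfac : ∀ x y z : ℝ, x ≠ y → x * z = z * y → z = 0 := by
    intro x y z hne h
    rcases mul_eq_zero.mp (show (x - y) * z = 0 by linear_combination h) with h' | h'
    · exact absurd (by linarith) hne
    · exact h'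
  have hD00 : D 0 0 = l1 := by rw [hDdef]; rfl
  have hD11 : D 1 1 = 1 := by rw [hDdef]; rfl
  have hD22 : D 2 2 = l3 := by rw [hDdef]; rfl
  have hne11 : l1 ≠ 1 := ne_of_lt hl1
  have hne31 : l3 ≠ 1 := ne_of_gt hl3
  have hne13 : l1 ≠ l3 := ne_of_lt (lt_trans hl1 hl3)
  have h01 : M 0 1 = 0 := hfac l1 1 _ hne11 (by have := hcm 0 1; rwa [hD00, hD11] at this)
  have h02 : M 0 2 = 0 := hfac l1 l3 _ hne13 (by have := hcm 0 2; rwa [hD00, hD22] at this)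
  have h10 : M 1 0 = 0 := hfac 1 l1 _ hne11.symm (by have := hcm 1 0; rwa [hD00, hD11] at this)
  have h12 : M 1 2 = 0 := hfac 1 l3 _ hne31.symm (by have := hcm 1 2; rwa [hD11, hD22] at this)
  have h20 : M 2 0 = 0 := hfac l3 l1 _ hne13.symm (by have := hcm 2 0; rwa [hD00, hD22] at this)
  have h21 : M 2 1 = 0 := hfac l3 1 _ hne31 (by have := hcm 2 1; rwa [hD11, hD22] at this)
  have hM11 : M 1 1 = 1 := by
    have hv : ∀ k, (∑ l, V k l * u2 l) = u2 k := fun k => by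
      have := congrFun hVu2 k
      simpa [Matrix.mulVec, dotProduct] using this
    have e : M 1 1 = ∑ k, (∑ l, P 1 l * V l k) * P 1 k := by
      simp [hMdef, Matrix.mul_apply, Matrix.transpose_apply]
    rw [e]
    have hv0 := hv 0; have hv1 := hv 1; have hv2 := hv 2
    simp only [Fin.sum_univ_three] at hv0 hv1 hv2 ⊢
    simp only [hPdef, Matrix.of_apply, Matrix.cons_val_one, Matrix.head_cons, Matrix.cons_val_zero] at hv0 hv1 hv2 ⊢
    linear_combination u2 0 * hv0 + u2 1 * hv1 + u2 2 * hv2 + hn2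
  have hdet : ∀ x : ℝ, (M - x • 1).det = (D - x • 1).det := by
    intro x
    have f1 : M - x • 1 = P * (V - x • 1) * Pᵀ := by
      rw [hMdef, Matrix.mul_sub, Matrix.sub_mul]
      congr 1
      rw [Matrix.mul_smul, Matrix.smul_mul, Matrix.mul_one, hPPt]
    have f2 : V - x • 1 = R * (U - x • 1) * Rᵀ := by
      rw [hVrel, Matrix.mul_sub, Matrix.sub_mul]
      congr 1
      rw [Matrix.mul_smul, Matrix.smul_mul, Matrix.mul_one, hRRt]
    have f3 : U - x • 1 = Pᵀ * (D - x • 1) * P := by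
      rw [hUPDP, Matrix.mul_sub, Matrix.sub_mul]
      congr 1
      rw [Matrix.mul_smul, Matrix.smul_mul, Matrix.mul_one, hPtP]
    have d3 : (U - x • 1).det = (D - x • 1).det := by
      rw [f3, Matrix.det_mul, Matrix.det_mul, Matrix.det_transpose]
      linear_combination (D - x • 1).det * hdetP
    have d2 : (V - x • 1).det = (U - x • 1).det := by
      rw [f2, Matrix.det_mul, Matrix.det_mul, Matrix.det_transpose, hRdet]
      ring
    have d1 : (M - x • 1).det = (V - x • 1).det := by
      rw [f1, Matrix.det_mul, Matrix.det_mul, Matrix.det_transpose]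
      linear_combination (V - x • 1).det * hdetP
    rw [d1, d2, d3]
  have key : ∀ x : ℝ, (M 0 0 - x) * (1 - x) * (M 2 2 - x) = (l1 - x) * (1 - x) * (l3 - x) := by
    intro x
    have := hdet x
    rw [Matrix.det_fin_three, Matrix.det_fin_three] at this
    simp only [Matrix.sub_apply, Matrix.smul_apply, Matrix.one_apply, smul_eq_mul] at this
    simp [hDdef, h01, h02, h10, h12, h20, h21, hM11, Matrix.vecHead, Matrix.vecTail] at this
    linear_combination this
  have hl13 : l1 < l3 := lt_trans hl1 hl3
  have hMD : M ≠ D := by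
    intro h
    apply hUV
    rw [hUPDP, hVM, h]
  have hMform : ∀ p q : ℝ, M 0 0 = p → M 2 2 = q → M = !![p,0,0;0,1,0;0,0,q] := by
    intro p q hp hq
    ext i j
    fin_cases i <;> fin_cases j <;>
      simp [hp, hq, h01, h02, h10, h12, h20, h21, hM11, Matrix.vecHead, Matrix.vecTail]
  have k1 := key l1
  have k3 := key l3
  have hdiag : M 0 0 = l3 ∧ M 2 2 = l1 := by
    have g1 : (M 0 0 - l1) * ((1 - l1) * (M 2 2 - l1)) = 0 := by linear_combination k1
    have g3 : (M 0 0 - l3) * ((1 - l3) * (M 2 2 - l3)) = 0 := by linear_combination k3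
    have f1 : M 0 0 = l1 ∨ M 2 2 = l1 := by
      rcases mul_eq_zero.mp g1 with h | h
      · left; linarith
      · rcases mul_eq_zero.mp h with h' | h'
        · exact absurd h' (by intro hh; linarith)
        · right; linarith
    have f3 : M 0 0 = l3 ∨ M 2 2 = l3 := by
      rcases mul_eq_zero.mp g3 with h | h
      · left; linarith
      · rcases mul_eq_zero.mp h with h' | h'
        · exact absurd h' (by intro hh; linarith)
        · right; linarith
    rcases f1 with ha | ha <;> rcases f3 with hb | hb
    · exfalso; linarith
    · exfalso; exact hMD (by rw [hMform l1 l3 ha hb, hDdef])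
    · exact ⟨hb, ha⟩
    · exfalso; linarith
  have hVPDP : V = Pᵀ * D' * P := by
    rw [hVM, hMform l3 l1 hdiag.1 hdiag.2, hD'def]
  -- ## explicit solutions in the eigenbasis
  obtain ⟨c, hcdef⟩ : ∃ x : ℝ, x = (1 + l1 * l3) / (l1 + l3) := ⟨_, rfl⟩
  obtain ⟨g, hgdef⟩ : ∃ x : ℝ, x = s1 * s3 / (l1 + l3) := ⟨_, rfl⟩
  obtain ⟨a, hadef⟩ : ∃ x : ℝ, x = l3 * s1 * sS / (l1 + l3) := ⟨_, rfl⟩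
  obtain ⟨Rp, hRpdef⟩ : ∃ x : M3, x = !![c,0,g;0,1,0;-g,0,c] := ⟨_, rfl⟩
  obtain ⟨Rm, hRmdef⟩ : ∃ x : M3, x = !![c,0,-g;0,1,0;g,0,c] := ⟨_, rfl⟩
  obtain ⟨b0p, hbpdef⟩ : ∃ x : V3, x = ![a, 0, a] := ⟨_, rfl⟩
  obtain ⟨b0m, hbmdef⟩ : ∃ x : V3, x = ![a, 0, -a] := ⟨_, rfl⟩
  obtain ⟨m0up, hmupdef⟩ : ∃ x : V3, x = ![-s1/sS, 0, s3/sS] := ⟨_, rfl⟩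
  obtain ⟨m0um, hmumdef⟩ : ∃ x : V3, x = ![-s1/sS, 0, -s3/sS] := ⟨_, rfl⟩
  obtain ⟨m0vp, hmvpdef⟩ : ∃ x : V3, x = ![s3/sS, 0, -s1/sS] := ⟨_, rfl⟩
  obtain ⟨m0vm, hmvmdef⟩ : ∃ x : V3, x = ![-s3/sS, 0, -s1/sS] := ⟨_, rfl⟩
  have hapos : 0 < a := by rw [hadef]; exact div_pos (mul_pos (mul_pos hl3pos hs1p) hsSp) hL
  have hcg : c ^ 2 + g ^ 2 = 1 := by
    rw [hcdef, hgdef]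
    field_simp
    linear_combination (s3^2) * hs1 + (1 - l1^2) * hs3
  have hRpSO : SO3 Rp := by
    constructor
    · ext i j
      fin_cases i <;> fin_cases j <;>
        simp [hRpdef, Matrix.mul_apply, Matrix.one_apply, Fin.sum_univ_three,
          Matrix.vecHead, Matrix.vecTail] <;>
        (first | ring1 | linear_combination hcg | linear_combination -hcg)
    · rw [hRpdef, Matrix.det_fin_three]
      simp [Matrix.vecHead, Matrix.vecTail]
      first | ring1 | linear_combination hcg | linear_combination -hcg
  have hRmSO : SO3 Rm := by
    constructor
    · ext i j
      fin_cases i <;> fin_cases j <;>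
        simp [hRmdef, Matrix.mul_apply, Matrix.one_apply, Fin.sum_univ_three,
          Matrix.vecHead, Matrix.vecTail] <;>
        (first | ring1 | linear_combination hcg | linear_combination -hcg)
    · rw [hRmdef, Matrix.det_fin_three]
      simp [Matrix.vecHead, Matrix.vecTail]
      first | ring1 | linear_combination hcg | linear_combination -hcg
  have E1 : Rp * D - 1 = outer b0p m0up := by
    ext i j
    fin_cases i <;> fin_cases j <;>
      simp [hRpdef, hDdef, hbpdef, hmupdef, outer, Matrix.vecMulVec_apply, Matrix.mul_apply,
        Matrix.one_apply, Fin.sum_univ_three, Matrix.vecHead, Matrix.vecTail, hcdef, hgdef,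
        hadef] <;>
      field_simp <;>
      (first
        | ring1
        | linear_combination (l1+l3)*sS*l3*hs1
        | linear_combination (-(l1+l3)*sS*s1)*hgid
        | linear_combination (l1+l3)*sS*(-s3*hgid - l1*hs3)
        | linear_combination l3*hs1
        | linear_combination -l3*hs1
        | linear_combination hgid
        | linear_combination -hgid
        | linear_combination -s3*hgid - l1*hs3
        | linear_combination s3*hgid + l1*hs3)
  have E2 : Rm * D' - 1 = outer b0p m0vp := by
    ext i j
    fin_cases i <;> fin_cases j <;>
      simp [hRmdef, hD'def, hbpdef, hmvpdef, outer, Matrix.vecMulVec_apply, Matrix.mul_apply,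
        Matrix.one_apply, Fin.sum_univ_three, Matrix.vecHead, Matrix.vecTail, hcdef, hgdef,
        hadef] <;>
      field_simp <;>
      (first
        | ring1
        | linear_combination (l1+l3)*sS*l3*hs1
        | linear_combination (-(l1+l3)*sS*s1)*hgid
        | linear_combination (l1+l3)*sS*(-s3*hgid - l1*hs3)
        | linear_combination l3*hs1
        | linear_combination -l3*hs1
        | linear_combination hgid
        | linear_combination -hgid
        | linear_combination -s3*hgid - l1*hs3
        | linear_combination s3*hgid + l1*hs3)
  have E3 : Rm * D - 1 = outer b0m m0um := by
    ext i j
    fin_cases i <;> fin_cases j <;>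
      simp [hRmdef, hDdef, hbmdef, hmumdef, outer, Matrix.vecMulVec_apply, Matrix.mul_apply,
        Matrix.one_apply, Fin.sum_univ_three, Matrix.vecHead, Matrix.vecTail, hcdef, hgdef,
        hadef] <;>
      field_simp <;>
      (first
        | ring1
        | linear_combination (l1+l3)*sS*l3*hs1
        | linear_combination (-(l1+l3)*sS*s1)*hgid
        | linear_combination (l1+l3)*sS*(-s3*hgid - l1*hs3)
        | linear_combination l3*hs1
        | linear_combination -l3*hs1
        | linear_combination hgid
        | linear_combination -hgid
        | linear_combination -s3*hgid - l1*hs3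
        | linear_combination s3*hgid + l1*hs3)
  have E4 : Rp * D' - 1 = - outer b0m m0vm := by
    ext i j
    fin_cases i <;> fin_cases j <;>
      simp [hRpdef, hD'def, hbmdef, hmvmdef, outer, Matrix.vecMulVec_apply, Matrix.mul_apply,
        Matrix.one_apply, Fin.sum_univ_three, Matrix.vecHead, Matrix.vecTail, hcdef, hgdef,
        hadef] <;>
      field_simp <;>
      (first
        | ring1
        | linear_combination (l1+l3)*sS*l3*hs1
        | linear_combination (-(l1+l3)*sS*s1)*hgid
        | linear_combination (l1+l3)*sS*(-s3*hgid - l1*hs3)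
        | linear_combination l3*hs1
        | linear_combination -l3*hs1
        | linear_combination hgid
        | linear_combination -hgid
        | linear_combination -s3*hgid - l1*hs3
        | linear_combination s3*hgid + l1*hs3)
  -- ## transport through the basis change
  have hso3conj : ∀ Q : M3, SO3 Q → SO3 (Pᵀ * Q * P) := by
    intro Q ⟨hQ1, hQ2⟩
    constructor
    · have ht : (Pᵀ * Q * P)ᵀ = Pᵀ * Qᵀ * P := by
        rw [Matrix.transpose_mul, Matrix.transpose_mul, Matrix.transpose_transpose,
          Matrix.mul_assoc]
      rw [ht, conj_mul' hPPt, hQ1]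
      calc Pᵀ * 1 * P = Pᵀ * P := by rw [Matrix.mul_one]
      _ = 1 := hPtP
    · rw [Matrix.det_mul, Matrix.det_mul, Matrix.det_transpose, hQ2]
      linear_combination hdetP
  have htrans : ∀ (Q E : M3) (b m : V3), Q * E - 1 = outer b m →
      (Pᵀ * Q * P) * (Pᵀ * E * P) - 1 = outer (Pᵀ.mulVec b) (Pᵀ.mulVec m) := by
    intro Q E b m h
    rw [conj_mul' hPPt, ← outer_conj P b m, ← h, Matrix.mul_sub, Matrix.sub_mul,
      Matrix.mul_one, hPtP]
  have hdotconj : ∀ x : V3, Pᵀ.mulVec x ⬝ᵥ Pᵀ.mulVec x = x ⬝ᵥ x := by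
    intro x
    rw [Matrix.dotProduct_mulVec, Matrix.vecMul_transpose, Matrix.mulVec_mulVec, hPPt,
      Matrix.one_mulVec]
  have hPcancel : ∀ v : V3, P.mulVec (Pᵀ.mulVec v) = v := by
    intro v
    rw [Matrix.mulVec_mulVec, hPPt, Matrix.one_mulVec]
  -- unit norms of the normals
  have hnup : m0up ⬝ᵥ m0up = 1 := by
    simp [hmupdef, dotProduct, Fin.sum_univ_three]
    field_simp
    linear_combination hs1 + hs3 - hsS
  have hnum : m0um ⬝ᵥ m0um = 1 := by
    simp [hmumdef, dotProduct, Fin.sum_univ_three]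
    field_simp
    linear_combination hs1 + hs3 - hsS
  have hnvp : m0vp ⬝ᵥ m0vp = 1 := by
    simp [hmvpdef, dotProduct, Fin.sum_univ_three]
    field_simp
    linear_combination hs1 + hs3 - hsS
  have hnvm : m0vm ⬝ᵥ m0vm = 1 := by
    simp [hmvmdef, dotProduct, Fin.sum_univ_three]
    field_simp
    linear_combination hs1 + hs3 - hsS
  -- ## the witnesses
  refine ⟨Pᵀ * Rp * P, Pᵀ * Rm * P, Pᵀ * Rm * P, Pᵀ * Rp * P,
    Pᵀ.mulVec b0p, Pᵀ.mulVec b0m,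
    Pᵀ.mulVec m0up, Pᵀ.mulVec m0vp, Pᵀ.mulVec m0um, Pᵀ.mulVec m0vm,
    hso3conj Rp hRpSO, hso3conj Rm hRmSO, hso3conj Rm hRmSO, hso3conj Rp hRpSO,
    ?_, ?_, ?_, ?_, ?_, ?_, ?_, ?_, ?_, ?_, ?_⟩
  · intro h
    have := congrArg P.mulVec h
    rw [hPcancel, Matrix.mulVec_zero] at this
    have h0 := congrFun this 0
    simp [hbpdef] at h0
    exact absurd h0 (ne_of_gt hapos)
  · intro h
    have := congrArg P.mulVec h
    rw [hPcancel, Matrix.mulVec_zero] at this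
    have h0 := congrFun this 0
    simp [hbmdef] at h0
    exact absurd h0 (ne_of_gt hapos)
  · rw [hdotconj]; exact hnup
  · rw [hdotconj]; exact hnvp
  · rw [hdotconj]; exact hnum
  · rw [hdotconj]; exact hnvm
  · rw [hUPDP]; exact htrans Rp D b0p m0up E1
  · rw [hVPDP]; exact htrans Rm D' b0p m0vp E2
  · rw [hUPDP]; exact htrans Rm D b0m m0um E3
  · rw [hVPDP, conj_mul' hPPt]
    calc Pᵀ * (Rp * D') * P - 1
        = Pᵀ * (Rp * D') * P - Pᵀ * 1 * P := by rw [Matrix.mul_one, hPtP]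
      _ = Pᵀ * (Rp * D' - 1) * P := by rw [Matrix.mul_sub, Matrix.sub_mul]
      _ = Pᵀ * (-(outer b0m m0vm)) * P := by rw [E4]
      _ = -(Pᵀ * outer b0m m0vm * P) := by rw [Matrix.mul_neg, Matrix.neg_mul]
      _ = - outer (Pᵀ.mulVec b0m) (Pᵀ.mulVec m0vm) := by rw [outer_conj]
  · rintro ⟨t, ht⟩
    have := congrArg P.mulVec ht
    rw [hPcancel, Matrix.mulVec_smul, hPcancel] at this
    have h0 := congrFun this 0
    have h2 := congrFun this 2
    simp [hbpdef, hbmdef] at h0 h2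
    have : a = 0 := by linarith [h0, h2]
    exact absurd this (ne_of_gt hapos)
end
end

section
/- Let U, V be symmetric positive-definite real 3×3 matrices with U ≠ V, U V = V U, and V = R U R^T for some R ∈ SO(3). Suppose the eigenvalues of U are λ₁ < λ₂ = 1 < λ₃ with 0 < λ₁ < 1 and λ₃ = √(2 − λ₁²), and suppose U and V have a common unit eigenvector û₂ for the eigenvalue 1 (U û₂ = û₂ = V û₂). Then there exist rotations R_u⁺, R_v⁺, R_u⁻, R_v⁻ ∈ SO(3), nonzero vectors b_u⁺, b_v⁺, b_u⁻, b_v⁻ ∈ ℝ³ and unit vectors m̂⁺, m̂⁻ ∈ ℝ³ such that R_u⁺ U − I = b_u⁺ ⊗ m̂⁺, R_v⁺ V − I = b_v⁺ ⊗ m̂⁺, R_u⁻ U − I = b_u⁻ ⊗ m̂⁻, R_v⁻ V − I = b_v⁻ ⊗ m̂⁻, and m̂⁺ is not parallel to m̂⁻ (two distinct planar triple clusters of the second kind). -/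
open Matrix

noncomputable section

lemma outer_conj_s8 (N : M3) (x y : V3) :
    outer (N *ᵥ x) (N *ᵥ y) = N * outer x y * Nᵀ := by
  ext i j
  simp [outer, vecMulVec_apply, Matrix.mul_apply, Matrix.mulVec, dotProduct,
    Fin.sum_univ_three, Matrix.transpose_apply]
  ring

lemma outer_smul_smul (r t : ℝ) (x y : V3) :
    outer (r • x) (t • y) = (r * t) • outer x y := by
  ext i j
  simp [outer, vecMulVec_apply]
  ring

lemma key_s8 (A : M3) (l1 l3 : ℝ) (h2 : l1^2 + l3^2 = 2) (hne : l1 ≠ l3) (h3 : l3 ≠ 0)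
    (u1 u2 u3 : V3)
    (hn1 : u1 ⬝ᵥ u1 = 1) (hn2 : u2 ⬝ᵥ u2 = 1) (hn3 : u3 ⬝ᵥ u3 = 1)
    (ho12 : u1 ⬝ᵥ u2 = 0) (ho13 : u1 ⬝ᵥ u3 = 0) (ho23 : u2 ⬝ᵥ u3 = 0)
    (e1 : A.mulVec u1 = l1 • u1) (e2 : A.mulVec u2 = u2) (e3 : A.mulVec u3 = l3 • u3) :
    ∃ Q b, SO3 Q ∧ b ≠ 0 ∧ Q * A - 1 = outer b ((Real.sqrt 2)⁻¹ • (u3 - u1)) := by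
  have s2pos : (0:ℝ) < Real.sqrt 2 := Real.sqrt_pos.mpr (by norm_num)
  have hs2 : Real.sqrt 2 * Real.sqrt 2 = 2 := Real.mul_self_sqrt (by norm_num)
  have hs2ne : Real.sqrt 2 ≠ 0 := ne_of_gt s2pos
  set P : M3 := Matrix.of ![u1, u2, u3] with hP
  have h21 : u2 ⬝ᵥ u1 = 0 := by rw [dotProduct_comm]; exact ho12
  have h31 : u3 ⬝ᵥ u1 = 0 := by rw [dotProduct_comm]; exact ho13
  have h32 : u3 ⬝ᵥ u2 = 0 := by rw [dotProduct_comm]; exact ho23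
  have hn1' := hn1; have hn2' := hn2; have hn3' := hn3
  have ho12' := ho12; have ho13' := ho13; have ho23' := ho23
  have h21' := h21; have h31' := h31; have h32' := h32
  simp only [dotProduct, Fin.sum_univ_three] at hn1' hn2' hn3' ho12' ho13' ho23' h21' h31' h32'
  have hPPt : P * Pᵀ = 1 := by
    ext i j
    rw [Matrix.mul_apply]
    fin_cases i <;> fin_cases j <;>
      simp [Fin.sum_univ_three, Matrix.transpose_apply, hP, Matrix.one_apply,
        Matrix.vecHead, Matrix.vecTail] <;>
      first
        | linarith [hn1'] | linarith [hn2'] | linarith [hn3']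
        | linarith [ho12'] | linarith [ho13'] | linarith [ho23']
        | linarith [h21'] | linarith [h31'] | linarith [h32']
  have hPtP : Pᵀ * P = 1 := mul_eq_one_comm.mp hPPt
  set Dm : M3 := !![l1,0,0;0,1,0;0,0,l3] with hDm
  set Mm : M3 := !![(l1+l3)/2, 0, (l3-l1)/2; 0,1,0; -((l3-l1)/2), 0, (l1+l3)/2] with hMm
  have A1 : ∀ i, A i 0 * u1 0 + A i 1 * u1 1 + A i 2 * u1 2 = l1 * u1 i := fun i => by
    simpa [Matrix.mulVec, dotProduct, Fin.sum_univ_three] using congrFun e1 i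
  have A2 : ∀ i, A i 0 * u2 0 + A i 1 * u2 1 + A i 2 * u2 2 = u2 i := fun i => by
    simpa [Matrix.mulVec, dotProduct, Fin.sum_univ_three] using congrFun e2 i
  have A3 : ∀ i, A i 0 * u3 0 + A i 1 * u3 1 + A i 2 * u3 2 = l3 * u3 i := fun i => by
    simpa [Matrix.mulVec, dotProduct, Fin.sum_univ_three] using congrFun e3 i
  have hAP : A * Pᵀ = Pᵀ * Dm := by
    ext i j
    rw [Matrix.mul_apply, Matrix.mul_apply]
    fin_cases j <;>
      simp [Fin.sum_univ_three, Matrix.transpose_apply, hP, hDm,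
        Matrix.vecHead, Matrix.vecTail]
    · linarith [A1 i]
    · linarith [A2 i]
    · linarith [A3 i]
  have hA : A = Pᵀ * Dm * P := by
    calc A = A * (Pᵀ * P) := by rw [hPtP, Matrix.mul_one]
    _ = (A * Pᵀ) * P := by rw [Matrix.mul_assoc]
    _ = Pᵀ * Dm * P := by rw [hAP]
  set Q : M3 := Pᵀ * Mm * P with hQ
  have hMtM : Mmᵀ * Mm = 1 := by
    ext i j
    rw [Matrix.mul_apply]
    fin_cases i <;> fin_cases j <;>
      simp [Fin.sum_univ_three, Matrix.transpose_apply, hMm, Matrix.one_apply,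
        Matrix.vecHead, Matrix.vecTail] <;>
      ring_nf <;> linarith [h2]
  have hQtQ : Qᵀ * Q = 1 := by
    rw [hQ]
    simp only [Matrix.transpose_mul, Matrix.transpose_transpose, Matrix.mul_assoc]
    rw [← Matrix.mul_assoc P Pᵀ, hPPt, Matrix.one_mul,
      ← Matrix.mul_assoc Mmᵀ Mm, hMtM, Matrix.one_mul, hPtP]
  have hdetP : P.det * P.det = 1 := by
    have := congrArg Matrix.det hPPt
    rwa [Matrix.det_mul, Matrix.det_transpose, Matrix.det_one, mul_comm] at this
  have hdetM : Mm.det = 1 := by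
    simp [hMm, Matrix.det_fin_three]
    ring_nf
    linarith [h2]
  have hdetQ : Q.det = 1 := by
    rw [hQ, Matrix.det_mul, Matrix.det_mul, Matrix.det_transpose, hdetM]
    linear_combination hdetP
  have hsmul : ((l3 - l1)/Real.sqrt 2) * (Real.sqrt 2)⁻¹ = (l3 - l1)/2 := by
    rw [show (Real.sqrt 2)⁻¹ = 1 / Real.sqrt 2 by rw [one_div], div_mul_div_comm, mul_one, hs2]
  have hmc : Pᵀ *ᵥ ((Real.sqrt 2)⁻¹ • ![(-1:ℝ),0,1]) = (Real.sqrt 2)⁻¹ • (u3 - u1) := by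
    funext i
    simp [Matrix.mulVec, dotProduct, Fin.sum_univ_three, hP, Matrix.transpose_apply,
      Matrix.vecHead, Matrix.vecTail]
    ring
  have hMD : Mm * Dm - 1 = ((l3 - l1)/2) • outer ![l3,0,l1] ![(-1:ℝ),0,1] := by
    ext i j
    fin_cases i <;> fin_cases j <;>
      simp [Fin.sum_univ_three, Matrix.mul_apply, hMm, hDm, Matrix.one_apply,
        outer, vecMulVec_apply, Matrix.vecHead, Matrix.vecTail] <;>
      ring_nf <;> linarith [h2]
  refine ⟨Q, Pᵀ *ᵥ (((l3 - l1)/Real.sqrt 2) • ![l3,0,l1]), ⟨hQtQ, hdetQ⟩, ?_, ?_⟩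
  · intro h
    have h0 : P *ᵥ (Pᵀ *ᵥ (((l3 - l1)/Real.sqrt 2) • ![l3,0,l1])) = 0 := by
      rw [h, Matrix.mulVec_zero]
    rw [Matrix.mulVec_mulVec, hPPt, Matrix.one_mulVec] at h0
    have h00 := congrFun h0 0
    have hz : ((l3 - l1)/Real.sqrt 2) * l3 = 0 := by
      simpa only [Pi.smul_apply, smul_eq_mul, Matrix.cons_val_zero, Pi.zero_apply] using h00
    exact (mul_ne_zero (div_ne_zero (sub_ne_zero.mpr hne.symm) hs2ne) h3) hz
  · rw [← hmc, outer_conj_s8, Matrix.transpose_transpose, outer_smul_smul, hsmul, ← hMD, hQ, hA]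
    simp only [Matrix.mul_assoc]
    rw [← Matrix.mul_assoc P Pᵀ, hPPt, Matrix.one_mul]
    rw [Matrix.sub_mul, Matrix.mul_sub, Matrix.one_mul, hPtP]
    simp only [Matrix.mul_assoc]

lemma ortho_complete (u1 u2 u3 : V3)
    (hn1 : u1 ⬝ᵥ u1 = 1) (hn2 : u2 ⬝ᵥ u2 = 1) (hn3 : u3 ⬝ᵥ u3 = 1)
    (ho12 : u1 ⬝ᵥ u2 = 0) (ho13 : u1 ⬝ᵥ u3 = 0) (ho23 : u2 ⬝ᵥ u3 = 0)
    (x : V3) : (u1 ⬝ᵥ x) • u1 + (u2 ⬝ᵥ x) • u2 + (u3 ⬝ᵥ x) • u3 = x := by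
  set P : M3 := Matrix.of ![u1, u2, u3] with hP
  have h21 : u2 ⬝ᵥ u1 = 0 := by rw [dotProduct_comm]; exact ho12
  have h31 : u3 ⬝ᵥ u1 = 0 := by rw [dotProduct_comm]; exact ho13
  have h32 : u3 ⬝ᵥ u2 = 0 := by rw [dotProduct_comm]; exact ho23
  have hn1' := hn1; have hn2' := hn2; have hn3' := hn3
  have ho12' := ho12; have ho13' := ho13; have ho23' := ho23
  have h21' := h21; have h31' := h31; have h32' := h32
  simp only [dotProduct, Fin.sum_univ_three] at hn1' hn2' hn3' ho12' ho13' ho23' h21' h31' h32'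
  have hPPt : P * Pᵀ = 1 := by
    ext i j
    rw [Matrix.mul_apply]
    fin_cases i <;> fin_cases j <;>
      simp [Fin.sum_univ_three, Matrix.transpose_apply, hP, Matrix.one_apply,
        Matrix.vecHead, Matrix.vecTail] <;>
      first
        | linarith [hn1'] | linarith [hn2'] | linarith [hn3']
        | linarith [ho12'] | linarith [ho13'] | linarith [ho23']
        | linarith [h21'] | linarith [h31'] | linarith [h32']
  have hPtP : Pᵀ * P = 1 := mul_eq_one_comm.mp hPPt
  funext i
  have h := congrFun (congrArg (fun M : M3 => M *ᵥ x) hPtP) i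
  simp only [Matrix.one_mulVec] at h
  rw [← Matrix.mulVec_mulVec] at h
  simp [Matrix.mulVec, dotProduct, Matrix.mul_apply, Fin.sum_univ_three,
    Matrix.transpose_apply, hP, Matrix.vecHead, Matrix.vecTail] at h
  simp only [Pi.add_apply, Pi.smul_apply, smul_eq_mul, dotProduct, Fin.sum_univ_three]
  ring_nf
  ring_nf at h
  linarith [h]

lemma trace_eigen (A : M3) (d1 d2 d3 : ℝ) (u1 u2 u3 : V3)
    (hn1 : u1 ⬝ᵥ u1 = 1) (hn2 : u2 ⬝ᵥ u2 = 1) (hn3 : u3 ⬝ᵥ u3 = 1)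
    (ho12 : u1 ⬝ᵥ u2 = 0) (ho13 : u1 ⬝ᵥ u3 = 0) (ho23 : u2 ⬝ᵥ u3 = 0)
    (e1 : A.mulVec u1 = d1 • u1) (e2 : A.mulVec u2 = d2 • u2) (e3 : A.mulVec u3 = d3 • u3) :
    A.trace = d1 + d2 + d3 := by
  set P : M3 := Matrix.of ![u1, u2, u3] with hP
  have h21 : u2 ⬝ᵥ u1 = 0 := by rw [dotProduct_comm]; exact ho12
  have h31 : u3 ⬝ᵥ u1 = 0 := by rw [dotProduct_comm]; exact ho13
  have h32 : u3 ⬝ᵥ u2 = 0 := by rw [dotProduct_comm]; exact ho23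
  have hn1' := hn1; have hn2' := hn2; have hn3' := hn3
  have ho12' := ho12; have ho13' := ho13; have ho23' := ho23
  have h21' := h21; have h31' := h31; have h32' := h32
  simp only [dotProduct, Fin.sum_univ_three] at hn1' hn2' hn3' ho12' ho13' ho23' h21' h31' h32'
  have hPPt : P * Pᵀ = 1 := by
    ext i j
    rw [Matrix.mul_apply]
    fin_cases i <;> fin_cases j <;>
      simp [Fin.sum_univ_three, Matrix.transpose_apply, hP, Matrix.one_apply,
        Matrix.vecHead, Matrix.vecTail] <;>
      first
        | linarith [hn1'] | linarith [hn2'] | linarith [hn3']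
        | linarith [ho12'] | linarith [ho13'] | linarith [ho23']
        | linarith [h21'] | linarith [h31'] | linarith [h32']
  have hPtP : Pᵀ * P = 1 := mul_eq_one_comm.mp hPPt
  set Dm : M3 := !![d1,0,0;0,d2,0;0,0,d3] with hDm
  have A1 : ∀ i, A i 0 * u1 0 + A i 1 * u1 1 + A i 2 * u1 2 = d1 * u1 i := fun i => by
    simpa [Matrix.mulVec, dotProduct, Fin.sum_univ_three] using congrFun e1 i
  have A2 : ∀ i, A i 0 * u2 0 + A i 1 * u2 1 + A i 2 * u2 2 = d2 * u2 i := fun i => by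
    simpa [Matrix.mulVec, dotProduct, Fin.sum_univ_three] using congrFun e2 i
  have A3 : ∀ i, A i 0 * u3 0 + A i 1 * u3 1 + A i 2 * u3 2 = d3 * u3 i := fun i => by
    simpa [Matrix.mulVec, dotProduct, Fin.sum_univ_three] using congrFun e3 i
  have hAP : A * Pᵀ = Pᵀ * Dm := by
    ext i j
    rw [Matrix.mul_apply, Matrix.mul_apply]
    fin_cases j <;>
      simp [Fin.sum_univ_three, Matrix.transpose_apply, hP, hDm,
        Matrix.vecHead, Matrix.vecTail]
    · linarith [A1 i]
    · linarith [A2 i]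
    · linarith [A3 i]
  have hA : A = Pᵀ * Dm * P := by
    calc A = A * (Pᵀ * P) := by rw [hPtP, Matrix.mul_one]
    _ = (A * Pᵀ) * P := by rw [Matrix.mul_assoc]
    _ = Pᵀ * Dm * P := by rw [hAP]
  rw [hA, Matrix.trace_mul_comm, ← Matrix.mul_assoc, hPPt, Matrix.one_mul]
  simp [hDm, Matrix.trace_fin_three]

/-- **Triple clusters of the second kind.** If `U ≠ V` commute, are symmetry
related, have eigenvalues `λ₁ < 1 < λ₃` with `0 < λ₁ < 1`, `λ₃ = √(2−λ₁²)`,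
and a common unit eigenvector `û₂` for the eigenvalue 1, then there exist two
distinct planar triple clusters sharing interface normals:
`R_u⁺U − I = b_u⁺⊗m̂⁺`, `R_v⁺V − I = b_v⁺⊗m̂⁺`, `R_u⁻U − I = b_u⁻⊗m̂⁻`,
`R_v⁻V − I = b_v⁻⊗m̂⁻`, with `m̂⁺ ∦ m̂⁻`. -/
theorem triple_clusters_second_kind
    (U V : M3) (hU : U.PosDef) (hV : V.PosDef) (hUV : U ≠ V)
    (hcomm : U * V = V * U)
    (R : M3) (hR : SO3 R) (hVrel : V = R * U * R.transpose)
    (l1 l3 : ℝ)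
    (hl1lo : 0 < l1) (hl1 : l1 < 1) (hl3 : 1 < l3)
    (hl3eq : l3 = Real.sqrt (2 - l1 ^ 2))
    (u1 u2 u3 : V3)
    (hUu1 : U.mulVec u1 = l1 • u1) (hUu2 : U.mulVec u2 = u2)
    (hUu3 : U.mulVec u3 = l3 • u3)
    (hn1 : u1 ⬝ᵥ u1 = 1) (hn2 : u2 ⬝ᵥ u2 = 1) (hn3 : u3 ⬝ᵥ u3 = 1)
    (ho12 : u1 ⬝ᵥ u2 = 0) (ho13 : u1 ⬝ᵥ u3 = 0) (ho23 : u2 ⬝ᵥ u3 = 0)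
    (hVu2 : V.mulVec u2 = u2) :
    ∃ (Rup Rvp Rum Rvm : M3) (bup bvp bum bvm mp mm : V3),
      SO3 Rup ∧ SO3 Rvp ∧ SO3 Rum ∧ SO3 Rvm ∧
      bup ≠ 0 ∧ bvp ≠ 0 ∧ bum ≠ 0 ∧ bvm ≠ 0 ∧
      mp ⬝ᵥ mp = 1 ∧ mm ⬝ᵥ mm = 1 ∧
      Rup * U - 1 = outer bup mp ∧
      Rvp * V - 1 = outer bvp mp ∧
      Rum * U - 1 = outer bum mm ∧
      Rvm * V - 1 = outer bvm mm ∧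
      ¬ ∃ t : ℝ, mm = t • mp := by
  have s2pos : (0:ℝ) < Real.sqrt 2 := Real.sqrt_pos.mpr (by norm_num)
  have hs2 : Real.sqrt 2 * Real.sqrt 2 = 2 := Real.mul_self_sqrt (by norm_num)
  have hs2ne : Real.sqrt 2 ≠ 0 := ne_of_gt s2pos
  have hl13 : l1 ≠ l3 := by linarith
  have hl3sq : l3 ^ 2 = 2 - l1 ^ 2 := by
    rw [hl3eq]; exact Real.sq_sqrt (by nlinarith)
  have hsum : l1 ^ 2 + l3 ^ 2 = 2 := by linarith
  -- symmetry of U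
  have hUsym : Uᵀ = U := by
    have := hU.1
    rwa [Matrix.IsHermitian, Matrix.conjTranspose_eq_transpose_of_trivial] at this
  have dsym : ∀ (u x : V3), u ⬝ᵥ (U *ᵥ x) = (U *ᵥ u) ⬝ᵥ x := by
    intro u x
    rw [Matrix.dotProduct_mulVec, ← Matrix.mulVec_transpose, hUsym]
  have h31 : u3 ⬝ᵥ u1 = 0 := by rw [dotProduct_comm]; exact ho13
  have h21 : u2 ⬝ᵥ u1 = 0 := by rw [dotProduct_comm]; exact ho12
  have h32 : u3 ⬝ᵥ u2 = 0 := by rw [dotProduct_comm]; exact ho23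
  -- concrete eigen argument for x = V *ᵥ u1
  have hx1eig : U *ᵥ (V *ᵥ u1) = l1 • (V *ᵥ u1) := by
    rw [Matrix.mulVec_mulVec, hcomm, ← Matrix.mulVec_mulVec, hUu1, Matrix.mulVec_smul]
  have hx3eig : U *ᵥ (V *ᵥ u3) = l3 • (V *ᵥ u3) := by
    rw [Matrix.mulVec_mulVec, hcomm, ← Matrix.mulVec_mulVec, hUu3, Matrix.mulVec_smul]
  have span1 : ∀ x : V3, U *ᵥ x = l1 • x → x = (u1 ⬝ᵥ x) • u1 := by
    intro x hx
    have hb : u2 ⬝ᵥ x = 0 := by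
      have h1 : u2 ⬝ᵥ (U *ᵥ x) = u2 ⬝ᵥ x := by rw [dsym, hUu2]
      have h2 : u2 ⬝ᵥ (U *ᵥ x) = l1 * (u2 ⬝ᵥ x) := by rw [hx, dotProduct_smul, smul_eq_mul]
      have : (1 - l1) * (u2 ⬝ᵥ x) = 0 := by linarith
      rcases mul_eq_zero.mp this with h | h
      · linarith
      · exact h
    have hcv : u3 ⬝ᵥ x = 0 := by
      have h1 : u3 ⬝ᵥ (U *ᵥ x) = l3 * (u3 ⬝ᵥ x) := by
        rw [dsym, hUu3, smul_dotProduct, smul_eq_mul]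
      have h2 : u3 ⬝ᵥ (U *ᵥ x) = l1 * (u3 ⬝ᵥ x) := by rw [hx, dotProduct_smul, smul_eq_mul]
      have : (l3 - l1) * (u3 ⬝ᵥ x) = 0 := by linarith
      rcases mul_eq_zero.mp this with h | h
      · exfalso; exact hl13 (by linarith)
      · exact h
    have := ortho_complete u1 u2 u3 hn1 hn2 hn3 ho12 ho13 ho23 x
    rw [hb, hcv] at this
    simpa using this.symm
  have span3 : ∀ x : V3, U *ᵥ x = l3 • x → x = (u3 ⬝ᵥ x) • u3 := by
    intro x hx
    have hb : u2 ⬝ᵥ x = 0 := by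
      have h1 : u2 ⬝ᵥ (U *ᵥ x) = u2 ⬝ᵥ x := by rw [dsym, hUu2]
      have h2 : u2 ⬝ᵥ (U *ᵥ x) = l3 * (u2 ⬝ᵥ x) := by rw [hx, dotProduct_smul, smul_eq_mul]
      have : (1 - l3) * (u2 ⬝ᵥ x) = 0 := by linarith
      rcases mul_eq_zero.mp this with h | h
      · exfalso; linarith
      · exact h
    have ha : u1 ⬝ᵥ x = 0 := by
      have h1 : u1 ⬝ᵥ (U *ᵥ x) = l1 * (u1 ⬝ᵥ x) := by
        rw [dsym, hUu1, smul_dotProduct, smul_eq_mul]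
      have h2 : u1 ⬝ᵥ (U *ᵥ x) = l3 * (u1 ⬝ᵥ x) := by rw [hx, dotProduct_smul, smul_eq_mul]
      have : (l1 - l3) * (u1 ⬝ᵥ x) = 0 := by linarith
      rcases mul_eq_zero.mp this with h | h
      · exfalso; exact hl13 (by linarith)
      · exact h
    have := ortho_complete u1 u2 u3 hn1 hn2 hn3 ho12 ho13 ho23 x
    rw [hb, ha] at this
    simpa using this.symm
  set a1 : ℝ := u1 ⬝ᵥ (V *ᵥ u1) with ha1def
  set a3 : ℝ := u3 ⬝ᵥ (V *ᵥ u3) with ha3def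
  have hVu1 : V *ᵥ u1 = a1 • u1 := span1 _ hx1eig
  have hVu3 : V *ᵥ u3 = a3 • u3 := span3 _ hx3eig
  -- positivity
  have hu1ne : u1 ≠ 0 := by
    intro h; rw [h] at hn1; simp at hn1
  have hu3ne : u3 ≠ 0 := by
    intro h; rw [h] at hn3; simp at hn3
  have ha1pos : 0 < a1 := by
    have := hV.dotProduct_mulVec_pos hu1ne
    rwa [star_trivial, hVu1, dotProduct_smul, smul_eq_mul, hn1, mul_one] at this
  have ha3pos : 0 < a3 := by
    have := hV.dotProduct_mulVec_pos hu3ne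
    rwa [star_trivial, hVu3, dotProduct_smul, smul_eq_mul, hn3, mul_one] at this
  -- traces
  have hRtR : Rᵀ * R = 1 := hR.1
  have hRRt : R * Rᵀ = 1 := mul_eq_one_comm.mp hRtR
  have conjtr : ∀ X : M3, (R * X * Rᵀ).trace = X.trace := by
    intro X
    rw [Matrix.trace_mul_comm, ← Matrix.mul_assoc, hRtR, Matrix.one_mul]
  have hVV : V * V = R * (U * U) * Rᵀ := by
    rw [hVrel]
    simp only [Matrix.mul_assoc]
    rw [← Matrix.mul_assoc Rᵀ R, hRtR, Matrix.one_mul]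
  have hU2u1 : (U * U) *ᵥ u1 = (l1 ^ 2) • u1 := by
    rw [← Matrix.mulVec_mulVec, hUu1, Matrix.mulVec_smul, hUu1, smul_smul]
    norm_num [pow_two]
  have hU2u2 : (U * U) *ᵥ u2 = (1 : ℝ) • u2 := by
    rw [← Matrix.mulVec_mulVec, hUu2, hUu2, one_smul]
  have hU2u3 : (U * U) *ᵥ u3 = (l3 ^ 2) • u3 := by
    rw [← Matrix.mulVec_mulVec, hUu3, Matrix.mulVec_smul, hUu3, smul_smul]
    norm_num [pow_two]
  have hV2u1 : (V * V) *ᵥ u1 = (a1 ^ 2) • u1 := by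
    rw [← Matrix.mulVec_mulVec, hVu1, Matrix.mulVec_smul, hVu1, smul_smul]
    norm_num [pow_two]
  have hV2u2 : (V * V) *ᵥ u2 = (1 : ℝ) • u2 := by
    rw [← Matrix.mulVec_mulVec, hVu2, hVu2, one_smul]
  have hV2u3 : (V * V) *ᵥ u3 = (a3 ^ 2) • u3 := by
    rw [← Matrix.mulVec_mulVec, hVu3, Matrix.mulVec_smul, hVu3, smul_smul]
    norm_num [pow_two]
  have tU2 : (U * U).trace = l1 ^ 2 + 1 + l3 ^ 2 :=
    trace_eigen (U * U) (l1 ^ 2) 1 (l3 ^ 2) u1 u2 u3 hn1 hn2 hn3 ho12 ho13 ho23 hU2u1 hU2u2 hU2u3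
  have tV2 : (V * V).trace = a1 ^ 2 + 1 + a3 ^ 2 :=
    trace_eigen (V * V) (a1 ^ 2) 1 (a3 ^ 2) u1 u2 u3 hn1 hn2 hn3 ho12 ho13 ho23 hV2u1 hV2u2 hV2u3
  have htr2 : (V * V).trace = (U * U).trace := by rw [hVV, conjtr]
  have hsumA : a1 ^ 2 + a3 ^ 2 = 2 := by
    rw [tU2, tV2] at htr2; linarith
  have hVu2' : V *ᵥ u2 = (1 : ℝ) • u2 := by rw [hVu2, one_smul]
  have hUu2' : U *ᵥ u2 = (1 : ℝ) • u2 := by rw [hUu2, one_smul]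
  have tU : U.trace = l1 + 1 + l3 :=
    trace_eigen U l1 1 l3 u1 u2 u3 hn1 hn2 hn3 ho12 ho13 ho23 hUu1 hUu2' hUu3
  have tV : V.trace = a1 + 1 + a3 :=
    trace_eigen V a1 1 a3 u1 u2 u3 hn1 hn2 hn3 ho12 ho13 ho23 hVu1 hVu2' hVu3
  have htr1 : V.trace = U.trace := by rw [hVrel, conjtr]
  have hsum1 : a1 + a3 = l1 + l3 := by rw [tU, tV] at htr1; linarith
  have ha13 : a1 ≠ a3 := by
    intro h
    have ha1sq : a1 ^ 2 = 1 := by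
      linear_combination hsumA / 2 + (a1 + a3) / 2 * h
    have hz : (a1 - 1) * (a1 + 1) = 0 := by linear_combination ha1sq
    have ha1one : a1 = 1 := by
      rcases mul_eq_zero.mp hz with h' | h'
      · linarith
      · linarith
    have hl1l3 : l1 + l3 = 2 := by linarith
    have hz2 : (l1 - l3) ^ 2 = 0 := by
      linear_combination 2 * hsum - (l1 + l3 + 2) * hl1l3
    have : l1 - l3 = 0 := by
      exact pow_eq_zero_iff (by norm_num) |>.mp hz2
    exact hl13 (by linarith)
  have ha3ne : a3 ≠ 0 := ne_of_gt ha3pos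
  have hl3ne : l3 ≠ 0 := by linarith
  -- hypotheses for -u1
  have hn1n : (-u1) ⬝ᵥ (-u1) = 1 := by rw [neg_dotProduct, dotProduct_neg, neg_neg, hn1]
  have ho12n : (-u1) ⬝ᵥ u2 = 0 := by rw [neg_dotProduct, ho12, neg_zero]
  have ho13n : (-u1) ⬝ᵥ u3 = 0 := by rw [neg_dotProduct, ho13, neg_zero]
  have hUu1n : U *ᵥ (-u1) = l1 • (-u1) := by rw [Matrix.mulVec_neg, hUu1, smul_neg]
  have hVu1n : V *ᵥ (-u1) = a1 • (-u1) := by rw [Matrix.mulVec_neg, hVu1, smul_neg]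
  obtain ⟨Rup, bup, hSOup, hbup, hEup⟩ :=
    key_s8 U l1 l3 hsum hl13 hl3ne u1 u2 u3 hn1 hn2 hn3 ho12 ho13 ho23 hUu1 hUu2 hUu3
  obtain ⟨Rum, bum, hSOum, hbum, hEum⟩ :=
    key_s8 U l1 l3 hsum hl13 hl3ne (-u1) u2 u3 hn1n hn2 hn3 ho12n ho13n ho23 hUu1n hUu2 hUu3
  obtain ⟨Rvp, bvp, hSOvp, hbvp, hEvp⟩ :=
    key_s8 V a1 a3 hsumA ha13 ha3ne u1 u2 u3 hn1 hn2 hn3 ho12 ho13 ho23 hVu1 hVu2 hVu3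
  obtain ⟨Rvm, bvm, hSOvm, hbvm, hEvm⟩ :=
    key_s8 V a1 a3 hsumA ha13 ha3ne (-u1) u2 u3 hn1n hn2 hn3 ho12n ho13n ho23 hVu1n hVu2 hVu3
  refine ⟨Rup, Rvp, Rum, Rvm, bup, bvp, bum, bvm,
    (Real.sqrt 2)⁻¹ • (u3 - u1), (Real.sqrt 2)⁻¹ • (u3 - -u1),
    hSOup, hSOvp, hSOum, hSOvm, hbup, hbvp, hbum, hbvm, ?_, ?_, hEup, hEvp, hEum, hEvm, ?_⟩
  · rw [smul_dotProduct, dotProduct_smul, sub_dotProduct, dotProduct_sub, dotProduct_sub]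
    rw [hn3, hn1, h31, ho13]
    rw [smul_eq_mul, smul_eq_mul]
    field_simp
    rw [Real.sq_sqrt (by norm_num : (0:ℝ) ≤ 2)]; norm_num
  · rw [smul_dotProduct, dotProduct_smul, sub_dotProduct, dotProduct_sub, dotProduct_sub,
      dotProduct_neg, dotProduct_neg, neg_dotProduct, neg_dotProduct]
    rw [hn3, hn1, h31, ho13]
    rw [smul_eq_mul, smul_eq_mul]
    field_simp
    rw [Real.sq_sqrt (by norm_num : (0:ℝ) ≤ 2)]; norm_num
  · rintro ⟨t, ht⟩
    have h3' := congrArg (fun v => u3 ⬝ᵥ v) ht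
    have h1' := congrArg (fun v => u1 ⬝ᵥ v) ht
    simp only [dotProduct_smul, dotProduct_sub, dotProduct_neg, smul_eq_mul,
      hn3, hn1, h31, ho13] at h3' h1'
    have hk : 0 < (Real.sqrt 2)⁻¹ := inv_pos.mpr s2pos
    ring_nf at h3' h1'
    first
      | linarith [hk, h3', h1']
      | nlinarith [hk, h3', h1']
end
end

section
/- Let x₁, x₂, x₃, y₁, y₂, y₃ ∈ ℝ³ be nonzero vectors such that x₁⊗y₁ + x₂⊗y₂ + x₃⊗y₃ = 0 (the zero 3×3 matrix). Then {x₁, x₂, x₃} spans a subspace of ℝ³ of dimension at most 2, {y₁, y₂, y₃} spans a subspace of dimension at most 2, and at least one of the two sets consists of pairwise parallel vectors (Ruddock's lemma). -/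
open Matrix

noncomputable section

lemma ruddock_pair_indep {u v : V3} (hu : u ≠ 0) (h : ¬∃ s : ℝ, v = s • u) :
    LinearIndependent ℝ ![u, v] := by
  rw [LinearIndependent.pair_iff' hu]
  intro a ha
  exact h ⟨a, ha.symm⟩

lemma ruddock_range_pair (u v : V3) : Set.range ![u, v] = {u, v} := by
  ext w
  simp [Fin.exists_fin_two, or_comm]

lemma ruddock_span_pair_le (u v : V3) :
    Module.finrank ℝ (Submodule.span ℝ ({u, v} : Set V3)) ≤ 2 := by
  classical
  have h := finrank_span_le_card (R := ℝ) ({u, v} : Set V3)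
  refine h.trans ?_
  have : ({u, v} : Set V3).toFinset ⊆ {u, v} := by
    intro w hw
    simp only [Set.mem_toFinset] at hw
    simpa using hw
  calc ({u, v} : Set V3).toFinset.card ≤ ({u, v} : Finset V3).card :=
        Finset.card_le_card this
    _ ≤ 2 := Finset.card_insert_le _ _ |>.trans (by simp)

lemma ruddock_span_le_span {a b c u v : V3} (ha : a ∈ Submodule.span ℝ ({u, v} : Set V3))
    (hb : b ∈ Submodule.span ℝ ({u, v} : Set V3)) (hc : c ∈ Submodule.span ℝ ({u, v} : Set V3)) :
    Module.finrank ℝ (Submodule.span ℝ ({a, b, c} : Set V3)) ≤ 2 := by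
  have hle : Submodule.span ℝ ({a, b, c} : Set V3) ≤ Submodule.span ℝ ({u, v} : Set V3) := by
    rw [Submodule.span_le]
    intro w hw
    rcases hw with rfl | rfl | rfl <;> assumption
  exact (Submodule.finrank_mono hle).trans (ruddock_span_pair_le u v)

/-- **Ruddock's lemma.** If `x₁⊗y₁ + x₂⊗y₂ + x₃⊗y₃ = 0` with all six vectors
nonzero, then both `{x₁,x₂,x₃}` and `{y₁,y₂,y₃}` span subspaces of dimension
at most 2, and at least one of the two sets consists of pairwise parallel
vectors. -/
theorem ruddock
    (x1 x2 x3 y1 y2 y3 : V3)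
    (hx1 : x1 ≠ 0) (hx2 : x2 ≠ 0) (hx3 : x3 ≠ 0)
    (hy1 : y1 ≠ 0) (hy2 : y2 ≠ 0) (hy3 : y3 ≠ 0)
    (hsum : outer x1 y1 + outer x2 y2 + outer x3 y3 = 0) :
    Module.finrank ℝ (Submodule.span ℝ ({x1, x2, x3} : Set V3)) ≤ 2 ∧
    Module.finrank ℝ (Submodule.span ℝ ({y1, y2, y3} : Set V3)) ≤ 2 ∧
    (((∃ s : ℝ, x2 = s • x1) ∧ (∃ t : ℝ, x3 = t • x1)) ∨
     ((∃ s : ℝ, y2 = s • y1) ∧ (∃ t : ℝ, y3 = t • y1))) := by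
  classical
  -- entrywise identity
  have hentry : ∀ i j, x1 i * y1 j + x2 i * y2 j + x3 i * y3 j = 0 := by
    intro i j
    have := congrFun (congrFun hsum i) j
    simpa [outer, Matrix.vecMulVec_apply, Matrix.add_apply] using this
  -- column identity : for each j, y1 j • x1 + y2 j • x2 + y3 j • x3 = 0
  have hcol : ∀ j, y1 j • x1 + y2 j • x2 + y3 j • x3 = 0 := by
    intro j
    funext i
    have := hentry i j
    simp only [Pi.add_apply, Pi.smul_apply, smul_eq_mul, Pi.zero_apply]
    linarith [hentry i j]
  -- row identity : for each i, x1 i • y1 + x2 i • y2 + x3 i • y3 = 0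
  have hrow : ∀ i, x1 i • y1 + x2 i • y2 + x3 i • y3 = 0 := by
    intro i
    funext j
    simp only [Pi.add_apply, Pi.smul_apply, smul_eq_mul, Pi.zero_apply]
    linarith [hentry i j]
  by_cases h2 : ∃ s : ℝ, x2 = s • x1
  · by_cases h3 : ∃ t : ℝ, x3 = t • x1
    · -- x's are all parallel
      obtain ⟨s, rfl⟩ := h2
      obtain ⟨t, rfl⟩ := h3
      -- x span has rank ≤ 1
      have hxmem : ∀ w ∈ ({x1, s • x1, t • x1} : Set V3),
          w ∈ Submodule.span ℝ ({x1, x1} : Set V3) := by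
        intro w hw
        have hx1mem : x1 ∈ Submodule.span ℝ ({x1, x1} : Set V3) :=
          Submodule.subset_span (by simp)
        rcases hw with rfl | rfl | rfl
        · exact hx1mem
        · exact Submodule.smul_mem _ s hx1mem
        · exact Submodule.smul_mem _ t hx1mem
      refine ⟨ruddock_span_le_span (hxmem _ (by simp)) (hxmem _ (by simp))
        (hxmem _ (by simp)), ?_, Or.inl ⟨⟨s, rfl⟩, ⟨t, rfl⟩⟩⟩
      -- y span : y1 ∈ span {y2, y3}
      obtain ⟨i, hi⟩ : ∃ i, x1 i ≠ 0 := by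
        by_contra h
        push_neg at h
        exact hx1 (funext h)
      have h := hrow i
      simp only [Pi.smul_apply, smul_eq_mul] at h
      have hrel : x1 i • (y1 + s • y2 + t • y3) = 0 := by
        linear_combination (norm := module) h
      have hrel2 : y1 + s • y2 + t • y3 = 0 := by
        rcases smul_eq_zero.mp hrel with h' | h'
        · exact absurd h' hi
        · exact h'
      have hy1eq : y1 = (-s) • y2 + (-t) • y3 := by
        linear_combination (norm := module) hrel2
      have hy2mem : y2 ∈ Submodule.span ℝ ({y2, y3} : Set V3) :=
        Submodule.subset_span (by simp)
      have hy3mem : y3 ∈ Submodule.span ℝ ({y2, y3} : Set V3) :=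
        Submodule.subset_span (by simp)
      have hy1mem : y1 ∈ Submodule.span ℝ ({y2, y3} : Set V3) := by
        rw [hy1eq]
        exact Submodule.add_mem _ (Submodule.smul_mem _ _ hy2mem)
          (Submodule.smul_mem _ _ hy3mem)
      exact ruddock_span_le_span hy1mem hy2mem hy3mem
    · -- x2 = s • x1 but x3 not parallel to x1 : contradiction (y3 = 0)
      exfalso
      obtain ⟨s, rfl⟩ := h2
      have hLI : LinearIndependent ℝ ![x1, x3] := ruddock_pair_indep hx1 h3
      have hpair := LinearIndependent.pair_iff.mp hLI
      apply hy3
      funext j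
      have h0 : (y1 j + s * y2 j) • x1 + y3 j • x3 = 0 := by
        have := hcol j
        linear_combination (norm := module) this
      simpa using (hpair _ _ h0).2
  · -- x2 not parallel to x1 : show y's are parallel
    have hLI : LinearIndependent ℝ ![x1, x2] := ruddock_pair_indep hx1 h2
    have hpair := LinearIndependent.pair_iff.mp hLI
    -- x3 ∈ span {x1, x2}
    have hx3mem : x3 ∈ Submodule.span ℝ ({x1, x2} : Set V3) := by
      by_contra hmem
      have hmem' : x3 ∉ Submodule.span ℝ (Set.range ![x1, x2]) := by
        rwa [ruddock_range_pair]
      have hLI3 : LinearIndependent ℝ (Fin.snoc ![x1, x2] x3 : Fin 3 → V3) :=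
        linearIndependent_fin_snoc.mpr ⟨hLI, hmem'⟩
      have hsnoc : (Fin.snoc ![x1, x2] x3 : Fin 3 → V3) = ![x1, x2, x3] := by
        funext i
        fin_cases i <;> rfl
      rw [hsnoc] at hLI3
      -- then y1 = 0
      have : y1 = 0 := by
        funext j
        have := Fintype.linearIndependent_iff.mp hLI3 ![y1 j, y2 j, y3 j] ?_ 0
        · simpa using this
        · have := hcol j
          simpa [Fin.sum_univ_three] using this
      exact hy1 this
    obtain ⟨a, b, hab⟩ := Submodule.mem_span_pair.mp hx3mem
    -- for each j, coefficients vanish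
    have hco : ∀ j, y1 j + a * y3 j = 0 ∧ y2 j + b * y3 j = 0 := by
      intro j
      have h0 : (y1 j + a * y3 j) • x1 + (y2 j + b * y3 j) • x2 = 0 := by
        have := hcol j
        rw [← hab] at this
        linear_combination (norm := module) this
      exact hpair _ _ h0
    have hy1e : y1 = (-a) • y3 := by
      funext j
      have := (hco j).1
      simp only [Pi.smul_apply, smul_eq_mul]
      linarith
    have hy2e : y2 = (-b) • y3 := by
      funext j
      have := (hco j).2
      simp only [Pi.smul_apply, smul_eq_mul]
      linarith
    have ha : a ≠ 0 := by
      rintro rfl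
      apply hy1
      simpa using hy1e
    have hy3e : y3 = (-a)⁻¹ • y1 := by
      rw [hy1e, smul_smul, inv_mul_cancel₀ (by simpa using ha), one_smul]
    refine ⟨?_, ?_, Or.inr ⟨⟨(-b) * (-a)⁻¹, by rw [hy2e, hy3e, smul_smul]⟩,
      ⟨(-a)⁻¹, hy3e⟩⟩⟩
    · -- x span ≤ 2
      have h1 : x1 ∈ Submodule.span ℝ ({x1, x2} : Set V3) := Submodule.subset_span (by simp)
      have h2' : x2 ∈ Submodule.span ℝ ({x1, x2} : Set V3) := Submodule.subset_span (by simp)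
      exact ruddock_span_le_span h1 h2' hx3mem
    · -- y span ≤ 2 : all multiples of y3... put them in span {y3, y3}
      have h3 : y3 ∈ Submodule.span ℝ ({y3, y3} : Set V3) := Submodule.subset_span (by simp)
      exact ruddock_span_le_span (by rw [hy1e]; exact Submodule.smul_mem _ _ h3)
        (by rw [hy2e]; exact Submodule.smul_mem _ _ h3) h3
end
end

section
/- Let 0 < λ₁ < 1 < λ₃, let û₁, û₂, û₃ be an orthonormal basis of ℝ³, and let ê₁ be a unit vector with ê₁ · û₂ = 0. (a) If EC1 and EC2 both hold, then λ₁√(λ₃²−1) = λ₃√(1−λ₁²) (equivalently λ₃ = λ₁/√(2λ₁²−1)) and (û₃·ê₁) = −(û₁·ê₁). (b) If EC3 and EC4 both hold, then λ₁² + λ₃² = 2 (equivalently λ₃ = √(2−λ₁²)) and (û₃·ê₁) = −(û₁·ê₁). -/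
open Matrix

lemma ec_alg (p q a c : ℝ) (hp : 0 < p) (hq : 0 < q) (hac : a ^ 2 + c ^ 2 = 1)
    (e1 : p * c = -(q * a)) (e2 : p * a = -(q * c)) : p = q ∧ c = -a := by
  have ha : (p ^ 2 - q ^ 2) * a = 0 := by nlinarith [e1, e2]
  have hc : (p ^ 2 - q ^ 2) * c = 0 := by nlinarith [e1, e2]
  have hpq : (p - q) * (p + q) = 0 := by nlinarith [ha, hc, hac, sq_nonneg (p^2 - q^2)]
  have hpq' : p = q := by
    rcases mul_eq_zero.mp hpq with h | h
    · linarith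
    · linarith
  refine ⟨hpq', ?_⟩
  have h2 : p * c = p * (-a) := by rw [e1, hpq']; ring
  exact mul_left_cancel₀ (ne_of_gt hp) h2

lemma ortho_sum (u1 u2 u3 e1 : Fin 3 → ℝ)
    (hn1 : u1 ⬝ᵥ u1 = 1) (hn2 : u2 ⬝ᵥ u2 = 1) (hn3 : u3 ⬝ᵥ u3 = 1)
    (ho12 : u1 ⬝ᵥ u2 = 0) (ho13 : u1 ⬝ᵥ u3 = 0) (ho23 : u2 ⬝ᵥ u3 = 0)
    (he1 : e1 ⬝ᵥ e1 = 1) :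
    (u1 ⬝ᵥ e1) ^ 2 + (u2 ⬝ᵥ e1) ^ 2 + (u3 ⬝ᵥ e1) ^ 2 = 1 := by
  set M : Matrix (Fin 3) (Fin 3) ℝ := Matrix.of ![u1, u2, u3] with hM
  simp only [dotProduct, Fin.sum_univ_three] at hn1 hn2 hn3 ho12 ho13 ho23
  have hMMT : M * Mᵀ = 1 := by
    ext i j
    rw [hM]
    fin_cases i <;> fin_cases j <;>
      simp only [Matrix.mul_apply, Matrix.transpose_apply, Matrix.of_apply,
        Fin.sum_univ_three, Matrix.one_apply, Fin.isValue,
        Matrix.cons_val_zero, Matrix.cons_val_one, Matrix.head_cons,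
        Matrix.cons_val_two, Matrix.tail_cons] <;>
      norm_num [Fin.ext_iff] <;> linarith
  have hMTM : Mᵀ * M = 1 := mul_eq_one_comm.mp hMMT
  have hMe : Mᵀ *ᵥ (M *ᵥ e1) = e1 := by
    rw [Matrix.mulVec_mulVec, hMTM, Matrix.one_mulVec]
  have key : (M *ᵥ e1) ⬝ᵥ (M *ᵥ e1) = 1 := by
    calc (M *ᵥ e1) ⬝ᵥ (M *ᵥ e1)
        = ((M *ᵥ e1) ᵥ* M) ⬝ᵥ e1 := Matrix.dotProduct_mulVec _ _ _
      _ = (Mᵀ *ᵥ (M *ᵥ e1)) ⬝ᵥ e1 := by rw [Matrix.mulVec_transpose]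
      _ = 1 := by rw [hMe, he1]
  rw [← key]
  simp [hM, Matrix.mulVec, dotProduct, Fin.sum_univ_three]
  ring


noncomputable section

/-- **Coexistence of EC1 ∧ EC2, resp. EC3 ∧ EC4.**
(a) If EC1 and EC2 both hold then `λ₁√(λ₃²−1) = λ₃√(1−λ₁²)` (equivalently
`λ₃ = λ₁/√(2λ₁²−1)`) and `(û₃·ê₁) = −(û₁·ê₁)`.
(b) If EC3 and EC4 both hold then `λ₁² + λ₃² = 2` (equivalently
`λ₃ = √(2−λ₁²)`) and `(û₃·ê₁) = −(û₁·ê₁)`. -/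
theorem ec_pairs_same_kind
    (l1 l3 : ℝ) (h0 : 0 < l1) (h1 : l1 < 1) (h3 : 1 < l3)
    (u1 u2 u3 : V3)
    (hn1 : u1 ⬝ᵥ u1 = 1) (hn2 : u2 ⬝ᵥ u2 = 1) (hn3 : u3 ⬝ᵥ u3 = 1)
    (ho12 : u1 ⬝ᵥ u2 = 0) (ho13 : u1 ⬝ᵥ u3 = 0) (ho23 : u2 ⬝ᵥ u3 = 0)
    (e1 : V3) (he1 : e1 ⬝ᵥ e1 = 1) (he1u2 : e1 ⬝ᵥ u2 = 0) :
    ((l1 * Real.sqrt (l3 ^ 2 - 1) * (u3 ⬝ᵥ e1) =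
          -(l3 * Real.sqrt (1 - l1 ^ 2) * (u1 ⬝ᵥ e1)) ∧
      l1 * Real.sqrt (l3 ^ 2 - 1) * (u1 ⬝ᵥ e1) =
          -(l3 * Real.sqrt (1 - l1 ^ 2) * (u3 ⬝ᵥ e1))) →
      (l1 * Real.sqrt (l3 ^ 2 - 1) = l3 * Real.sqrt (1 - l1 ^ 2) ∧
       l3 = l1 / Real.sqrt (2 * l1 ^ 2 - 1) ∧
       u3 ⬝ᵥ e1 = -(u1 ⬝ᵥ e1))) ∧
    ((Real.sqrt (1 - l1 ^ 2) * (u3 ⬝ᵥ e1) =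
          -(Real.sqrt (l3 ^ 2 - 1) * (u1 ⬝ᵥ e1)) ∧
      Real.sqrt (1 - l1 ^ 2) * (u1 ⬝ᵥ e1) =
          -(Real.sqrt (l3 ^ 2 - 1) * (u3 ⬝ᵥ e1))) →
      (l1 ^ 2 + l3 ^ 2 = 2 ∧
       l3 = Real.sqrt (2 - l1 ^ 2) ∧
       u3 ⬝ᵥ e1 = -(u1 ⬝ᵥ e1))) := by
  have hu2e : u2 ⬝ᵥ e1 = 0 := by rw [dotProduct_comm]; exact he1u2
  have hsum := ortho_sum u1 u2 u3 e1 hn1 hn2 hn3 ho12 ho13 ho23 he1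
  rw [hu2e] at hsum
  have hac : (u1 ⬝ᵥ e1) ^ 2 + (u3 ⬝ᵥ e1) ^ 2 = 1 := by linarith [hsum]
  have hs3 : (0:ℝ) < l3 ^ 2 - 1 := by nlinarith
  have hs1 : (0:ℝ) < 1 - l1 ^ 2 := by nlinarith
  have hr3 : 0 < Real.sqrt (l3 ^ 2 - 1) := Real.sqrt_pos.mpr hs3
  have hr1 : 0 < Real.sqrt (1 - l1 ^ 2) := Real.sqrt_pos.mpr hs1
  have hq3 : Real.sqrt (l3 ^ 2 - 1) ^ 2 = l3 ^ 2 - 1 := Real.sq_sqrt hs3.le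
  have hq1 : Real.sqrt (1 - l1 ^ 2) ^ 2 = 1 - l1 ^ 2 := Real.sq_sqrt hs1.le
  constructor
  · rintro ⟨ec1, ec2⟩
    obtain ⟨hpq, hca⟩ := ec_alg (l1 * Real.sqrt (l3 ^ 2 - 1))
      (l3 * Real.sqrt (1 - l1 ^ 2)) (u1 ⬝ᵥ e1) (u3 ⬝ᵥ e1)
      (mul_pos h0 hr3) (mul_pos (by linarith) hr1) hac ec1 ec2
    refine ⟨hpq, ?_, hca⟩
    have hsq : l1 ^ 2 * (l3 ^ 2 - 1) = l3 ^ 2 * (1 - l1 ^ 2) := by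
      have := congrArg (fun x => x ^ 2) hpq
      simp only [mul_pow, hq3, hq1] at this
      linarith [this]
    have key2 : l3 ^ 2 * (2 * l1 ^ 2 - 1) = l1 ^ 2 := by ring_nf; ring_nf at hsq; linarith
    have h2 : (0:ℝ) < 2 * l1 ^ 2 - 1 := by nlinarith [key2, mul_pos h0 h0, hs3]
    have ht : 0 < Real.sqrt (2 * l1 ^ 2 - 1) := Real.sqrt_pos.mpr h2
    have hqt : Real.sqrt (2 * l1 ^ 2 - 1) ^ 2 = 2 * l1 ^ 2 - 1 := Real.sq_sqrt h2.le
    have hA : (l3 * Real.sqrt (2 * l1 ^ 2 - 1)) ^ 2 = l1 ^ 2 := by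
      rw [mul_pow, hqt]; exact key2
    have h5 : l3 * Real.sqrt (2 * l1 ^ 2 - 1) = l1 := by
      have h6 : (l3 * Real.sqrt (2 * l1 ^ 2 - 1) - l1) *
          (l3 * Real.sqrt (2 * l1 ^ 2 - 1) + l1) = 0 := by
        have := hA; ring_nf at this ⊢; linarith
      rcases mul_eq_zero.mp h6 with h | h
      · linarith
      · have hpos := mul_pos (show (0:ℝ) < l3 by linarith) ht
        linarith
    rw [eq_div_iff (ne_of_gt ht)]
    exact h5
  · rintro ⟨ec3, ec4⟩
    obtain ⟨hpq, hca⟩ := ec_alg (Real.sqrt (1 - l1 ^ 2)) (Real.sqrt (l3 ^ 2 - 1))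
      (u1 ⬝ᵥ e1) (u3 ⬝ᵥ e1) hr1 hr3 hac ec3 ec4
    have hsq : 1 - l1 ^ 2 = l3 ^ 2 - 1 := by
      have := congrArg (fun x => x ^ 2) hpq
      simp only [hq3, hq1] at this
      linarith [this]
    refine ⟨by linarith, ?_, hca⟩
    rw [show (2:ℝ) - l1 ^ 2 = l3 ^ 2 by linarith,
      Real.sqrt_sq (by linarith : (0:ℝ) ≤ l3)]
end
end

section
/- Let 0 < λ₁ < 1 < λ₃, let û₁, û₂, û₃ be an orthonormal basis of ℝ³, and let ê₁ be a unit vector with ê₁ · û₂ = 0. Then EC1 and EC4 cannot both hold, and EC2 and EC3 cannot both hold. (Consequently, two coexisting triple clusters formed by a pair of compound domains with austenite must be of the same kind.) -/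
open Matrix

noncomputable section

def toE (x : V3) : EuclideanSpace ℝ (Fin 3) := (WithLp.equiv 2 (Fin 3 → ℝ)).symm x

lemma dot_as_inner (x y : V3) : (inner ℝ (toE x) (toE y) : ℝ) = x ⬝ᵥ y := by
  simp [toE, PiLp.inner_apply, dotProduct, RCLike.inner_apply, mul_comm]

lemma parseval3 (u1 u2 u3 e1 : V3)
    (hn1 : u1 ⬝ᵥ u1 = 1) (hn2 : u2 ⬝ᵥ u2 = 1) (hn3 : u3 ⬝ᵥ u3 = 1)
    (ho12 : u1 ⬝ᵥ u2 = 0) (ho13 : u1 ⬝ᵥ u3 = 0) (ho23 : u2 ⬝ᵥ u3 = 0)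
    (he1 : e1 ⬝ᵥ e1 = 1) :
    (u1 ⬝ᵥ e1) ^ 2 + (u2 ⬝ᵥ e1) ^ 2 + (u3 ⬝ᵥ e1) ^ 2 = 1 := by
  set f : Fin 3 → EuclideanSpace ℝ (Fin 3) := ![toE u1, toE u2, toE u3] with hf
  have i11 : (inner ℝ (toE u1) (toE u1) : ℝ) = 1 := by rw [dot_as_inner]; exact hn1
  have i22 : (inner ℝ (toE u2) (toE u2) : ℝ) = 1 := by rw [dot_as_inner]; exact hn2
  have i33 : (inner ℝ (toE u3) (toE u3) : ℝ) = 1 := by rw [dot_as_inner]; exact hn3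
  have i12 : (inner ℝ (toE u1) (toE u2) : ℝ) = 0 := by rw [dot_as_inner]; exact ho12
  have i13 : (inner ℝ (toE u1) (toE u3) : ℝ) = 0 := by rw [dot_as_inner]; exact ho13
  have i23 : (inner ℝ (toE u2) (toE u3) : ℝ) = 0 := by rw [dot_as_inner]; exact ho23
  have i21 : (inner ℝ (toE u2) (toE u1) : ℝ) = 0 := by rw [real_inner_comm]; exact i12
  have i31 : (inner ℝ (toE u3) (toE u1) : ℝ) = 0 := by rw [real_inner_comm]; exact i13
  have i32 : (inner ℝ (toE u3) (toE u2) : ℝ) = 0 := by rw [real_inner_comm]; exact i23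
  have hv : Orthonormal ℝ f := by
    rw [orthonormal_iff_ite]
    intro i j
    fin_cases i <;> fin_cases j <;>
      simp [hf, i11, i22, i33, i12, i13, i23, i21, i31, i32] <;>
      exact Or.inl (by rw [← sq_eq_sq₀ (norm_nonneg _) zero_le_one, ← real_inner_self_eq_norm_sq, one_pow]; assumption)
  have hcard : Fintype.card (Fin 3) = Module.finrank ℝ (EuclideanSpace ℝ (Fin 3)) := by
    simp
  let b : OrthonormalBasis (Fin 3) ℝ (EuclideanSpace ℝ (Fin 3)) :=
    (basisOfOrthonormalOfCardEqFinrank hv hcard).toOrthonormalBasis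
      (by rwa [coe_basisOfOrthonormalOfCardEqFinrank])
  have hb : ∀ i, b i = f i := by
    intro i
    simp [b, Module.Basis.coe_toOrthonormalBasis, coe_basisOfOrthonormalOfCardEqFinrank]
  have key := b.sum_inner_mul_inner (toE e1) (toE e1)
  rw [dot_as_inner] at key
  rw [Fin.sum_univ_three, hb 0, hb 1, hb 2] at key
  have hf0 : f 0 = toE u1 := rfl
  have hf1 : f 1 = toE u2 := rfl
  have hf2 : f 2 = toE u3 := rfl
  rw [hf0, hf1, hf2, dot_as_inner e1 u1, dot_as_inner e1 u2, dot_as_inner e1 u3,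
    dot_as_inner u1 e1, dot_as_inner u2 e1, dot_as_inner u3 e1] at key
  have c1 : e1 ⬝ᵥ u1 = u1 ⬝ᵥ e1 := dotProduct_comm _ _
  have c2 : e1 ⬝ᵥ u2 = u2 ⬝ᵥ e1 := dotProduct_comm _ _
  have c3 : e1 ⬝ᵥ u3 = u3 ⬝ᵥ e1 := dotProduct_comm _ _
  rw [c1, c2, c3, he1] at key
  nlinarith [key]

/-- **Different kinds of triple clusters cannot coexist.** For
`0 < λ₁ < 1 < λ₃`, an orthonormal basis `û₁, û₂, û₃` of `ℝ³` and a unit vector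
`ê₁ ⊥ û₂`: EC1 and EC4 cannot both hold, and EC2 and EC3 cannot both hold. -/
theorem ec_different_kinds_impossible
    (l1 l3 : ℝ) (h0 : 0 < l1) (h1 : l1 < 1) (h3 : 1 < l3)
    (u1 u2 u3 : V3)
    (hn1 : u1 ⬝ᵥ u1 = 1) (hn2 : u2 ⬝ᵥ u2 = 1) (hn3 : u3 ⬝ᵥ u3 = 1)
    (ho12 : u1 ⬝ᵥ u2 = 0) (ho13 : u1 ⬝ᵥ u3 = 0) (ho23 : u2 ⬝ᵥ u3 = 0)
    (e1 : V3) (he1 : e1 ⬝ᵥ e1 = 1) (he1u2 : e1 ⬝ᵥ u2 = 0) :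
    ¬ (l1 * Real.sqrt (l3 ^ 2 - 1) * (u3 ⬝ᵥ e1) =
          -(l3 * Real.sqrt (1 - l1 ^ 2) * (u1 ⬝ᵥ e1)) ∧
       Real.sqrt (1 - l1 ^ 2) * (u1 ⬝ᵥ e1) =
          -(Real.sqrt (l3 ^ 2 - 1) * (u3 ⬝ᵥ e1))) ∧
    ¬ (l1 * Real.sqrt (l3 ^ 2 - 1) * (u1 ⬝ᵥ e1) =
          -(l3 * Real.sqrt (1 - l1 ^ 2) * (u3 ⬝ᵥ e1)) ∧
       Real.sqrt (1 - l1 ^ 2) * (u3 ⬝ᵥ e1) =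
          -(Real.sqrt (l3 ^ 2 - 1) * (u1 ⬝ᵥ e1))) := by
  have hpar := parseval3 u1 u2 u3 e1 hn1 hn2 hn3 ho12 ho13 ho23 he1
  have hb : u2 ⬝ᵥ e1 = 0 := by rw [dotProduct_comm]; exact he1u2
  rw [hb] at hpar
  set a := u1 ⬝ᵥ e1 with ha'
  set c := u3 ⬝ᵥ e1 with hc'
  have hac : a ^ 2 + c ^ 2 = 1 := by nlinarith [hpar]
  have hs1 : 0 < Real.sqrt (1 - l1 ^ 2) := Real.sqrt_pos.mpr (by nlinarith)
  have hs3 : 0 < Real.sqrt (l3 ^ 2 - 1) := Real.sqrt_pos.mpr (by nlinarith)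
  set s1 := Real.sqrt (1 - l1 ^ 2) with hs1'
  set s3 := Real.sqrt (l3 ^ 2 - 1) with hs3'
  constructor
  · rintro ⟨hEC1, hEC4⟩
    have h : (l1 - l3) * (s3 * c) = 0 := by linear_combination hEC1 - l3 * hEC4
    have hc : c = 0 := by
      rcases mul_eq_zero.mp h with h' | h'
      · linarith
      · rcases mul_eq_zero.mp h' with h'' | h''
        · linarith
        · exact h''
    have ha : a = 0 := by
      have h2 : s1 * a = 0 := by rw [hc] at hEC4; simpa using hEC4
      rcases mul_eq_zero.mp h2 with h' | h'
      · linarith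
      · exact h'
    rw [ha, hc] at hac; norm_num at hac
  · rintro ⟨hEC2, hEC3⟩
    have h : (l1 - l3) * (s3 * a) = 0 := by linear_combination hEC2 - l3 * hEC3
    have ha : a = 0 := by
      rcases mul_eq_zero.mp h with h' | h'
      · linarith
      · rcases mul_eq_zero.mp h' with h'' | h''
        · linarith
        · exact h''
    have hc : c = 0 := by
      have h2 : s1 * c = 0 := by rw [ha] at hEC3; simpa using hEC3
      rcases mul_eq_zero.mp h2 with h' | h'
      · linarith
      · exact h'
    rw [ha, hc] at hac; norm_num at hac
end
end

section
/- Let 0 < λ₁ < 1 < λ₃, let û₁, û₂, û₃ be an orthonormal basis of ℝ³, and let ê₁ be a unit vector with ê₁ · û₂ = 0. If EC1 and EC3 both hold, or if EC2 and EC4 both hold, then λ₁ λ₃ = 1 (so that, with middle eigenvalue 1, the corresponding stretch tensor U satisfies det U = 1). (A single triple cluster that is simultaneously of the first and the second kind forces the transformation to be volume preserving.) -/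
open Matrix

noncomputable section

lemma pyth_aux (u1 u2 u3 e1 : V3)
    (hn1 : u1 ⬝ᵥ u1 = 1) (hn2 : u2 ⬝ᵥ u2 = 1) (hn3 : u3 ⬝ᵥ u3 = 1)
    (ho12 : u1 ⬝ᵥ u2 = 0) (ho13 : u1 ⬝ᵥ u3 = 0) (ho23 : u2 ⬝ᵥ u3 = 0)
    (he1 : e1 ⬝ᵥ e1 = 1) (he1u2 : e1 ⬝ᵥ u2 = 0) :
    (u1 ⬝ᵥ e1) ^ 2 + (u3 ⬝ᵥ e1) ^ 2 = 1 := by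
  have hMMT : (Matrix.of ![u1, u2, u3]) * (Matrix.of ![u1, u2, u3])ᵀ = 1 := by
    ext i j
    fin_cases i <;> fin_cases j <;>
      simp [Matrix.mul_apply, Fin.sum_univ_three, Matrix.one_apply,
        Matrix.transpose_apply, Matrix.vecHead, Matrix.vecTail,
        dotProduct] at * <;> linarith
  have hMTM : (Matrix.of ![u1, u2, u3])ᵀ * (Matrix.of ![u1, u2, u3]) = 1 :=
    mul_eq_one_comm.mp hMMT
  have key : ((Matrix.of ![u1, u2, u3]).mulVec e1) ⬝ᵥ
      ((Matrix.of ![u1, u2, u3]).mulVec e1) = 1 := by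
    have h1 : e1 ⬝ᵥ (((Matrix.of ![u1, u2, u3])ᵀ *
        (Matrix.of ![u1, u2, u3])).mulVec e1) = 1 := by
      rw [hMTM, Matrix.one_mulVec, he1]
    rwa [← Matrix.mulVec_mulVec, Matrix.dotProduct_mulVec,
      Matrix.vecMul_transpose] at h1
  have hmv : (Matrix.of ![u1, u2, u3]).mulVec e1 =
      ![u1 ⬝ᵥ e1, u2 ⬝ᵥ e1, u3 ⬝ᵥ e1] := by
    ext i
    fin_cases i <;> simp [Matrix.mulVec, dotProduct]
  rw [hmv] at key
  have h2 : u2 ⬝ᵥ e1 = 0 := by rw [dotProduct_comm]; exact he1u2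
  simp [dotProduct, Fin.sum_univ_three] at key h2 ⊢
  linear_combination key - (u2 0 * e1 0 + u2 1 * e1 1 + u2 2 * e1 2) * h2

/-- **A triple cluster of both kinds forces volume preservation.** For
`0 < λ₁ < 1 < λ₃`, an orthonormal basis `û₁, û₂, û₃` of `ℝ³` and a unit vector
`ê₁ ⊥ û₂`: if EC1 and EC3 both hold, or EC2 and EC4 both hold, then
`λ₁ λ₃ = 1` (so the stretch tensor with middle eigenvalue 1 has determinant
one). -/
theorem ec_both_kinds_volume_preserving
    (l1 l3 : ℝ) (h0 : 0 < l1) (h1 : l1 < 1) (h3 : 1 < l3)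
    (u1 u2 u3 : V3)
    (hn1 : u1 ⬝ᵥ u1 = 1) (hn2 : u2 ⬝ᵥ u2 = 1) (hn3 : u3 ⬝ᵥ u3 = 1)
    (ho12 : u1 ⬝ᵥ u2 = 0) (ho13 : u1 ⬝ᵥ u3 = 0) (ho23 : u2 ⬝ᵥ u3 = 0)
    (e1 : V3) (he1 : e1 ⬝ᵥ e1 = 1) (he1u2 : e1 ⬝ᵥ u2 = 0)
    (h : (l1 * Real.sqrt (l3 ^ 2 - 1) * (u3 ⬝ᵥ e1) =
            -(l3 * Real.sqrt (1 - l1 ^ 2) * (u1 ⬝ᵥ e1)) ∧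
          Real.sqrt (1 - l1 ^ 2) * (u3 ⬝ᵥ e1) =
            -(Real.sqrt (l3 ^ 2 - 1) * (u1 ⬝ᵥ e1))) ∨
         (l1 * Real.sqrt (l3 ^ 2 - 1) * (u1 ⬝ᵥ e1) =
            -(l3 * Real.sqrt (1 - l1 ^ 2) * (u3 ⬝ᵥ e1)) ∧
          Real.sqrt (1 - l1 ^ 2) * (u1 ⬝ᵥ e1) =
            -(Real.sqrt (l3 ^ 2 - 1) * (u3 ⬝ᵥ e1)))) :
    l1 * l3 = 1 := by
  have hpyth := pyth_aux u1 u2 u3 e1 hn1 hn2 hn3 ho12 ho13 ho23 he1 he1u2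
  set a := u1 ⬝ᵥ e1
  set b := u3 ⬝ᵥ e1
  set s1 := Real.sqrt (1 - l1 ^ 2) with hs1
  set s3 := Real.sqrt (l3 ^ 2 - 1) with hs3
  have hs1pos : 0 < s1 := Real.sqrt_pos.mpr (by nlinarith)
  have hs3pos : 0 < s3 := Real.sqrt_pos.mpr (by nlinarith)
  have hs1sq : s1 ^ 2 = 1 - l1 ^ 2 := Real.sq_sqrt (by nlinarith)
  have hs3sq : s3 ^ 2 = l3 ^ 2 - 1 := Real.sq_sqrt (by nlinarith)
  have hfin : l1 * (l3 ^ 2 - 1) = l3 * (1 - l1 ^ 2) → l1 * l3 = 1 := by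
    intro heq
    have hfac : (l1 * l3 - 1) * (l1 + l3) = 0 := by linear_combination heq
    rcases mul_eq_zero.mp hfac with hz | hz
    · linarith
    · linarith
  rcases h with ⟨hA, hB⟩ | ⟨hA, hB⟩
  · have key : l1 * s3 ^ 2 * a = l3 * s1 ^ 2 * a := by
      linear_combination l1 * s3 * hB - s1 * hA
    by_cases ha : a = 0
    · have hb : b = 0 := by
        have := hB
        rw [ha] at this
        simpa [hs1pos.ne'] using this
      rw [ha, hb] at hpyth; norm_num at hpyth
    · have heq := mul_right_cancel₀ ha key
      rw [hs1sq, hs3sq] at heq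
      exact hfin heq
  · have key : l1 * s3 ^ 2 * b = l3 * s1 ^ 2 * b := by
      linear_combination l1 * s3 * hB - s1 * hA
    by_cases hb : b = 0
    · have ha : a = 0 := by
        have := hB
        rw [hb] at this
        simpa [hs1pos.ne'] using this
      rw [ha, hb] at hpyth; norm_num at hpyth
    · have heq := mul_right_cancel₀ hb key
      rw [hs1sq, hs3sq] at heq
      exact hfin heq
end
end

section
/- Let 1/√2 < λ₁ < 1 and λ₃ := λ₁/√(2λ₁² − 1), and set a := (λ₁+λ₃)/2, b := (λ₃−λ₁)/2, U₁ := [[1,0,0],[0,a,b],[0,b,a]] (a cubic-to-orthorhombic stretch tensor with d = 1 and eigenvalues λ₁, 1, λ₃). Let ê := (1,1,0)/√2 and define the Type-I twin solution a_I := 2( U₁^{-1}ê/|U₁^{-1}ê|² − U₁ê ), n̂_I := ê. Then: (i) a_I · ( U₁ cof(U₁² − I) ) n̂_I = 0 (the second cofactor condition holds for the Type-I solution of the pair (U₁, U₃)); and (ii) for every μ ∈ [0,1], tr(U₁²) − det(U₁²) + (μ² − μ)|a_I|² − 2 > 0; indeed this quantity equals (2μ(μ−1) + 1)(λ₁² −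 1)²/(2λ₁² − 1). -/
open Matrix

noncomputable section

set_option maxHeartbeats 1600000

/-- **Extreme compatibility, cubic-to-orthorhombic, Type-I part.** With
`1/√2 < λ₁ < 1`, `λ₃ = λ₁/√(2λ₁²−1)`, `U₁ = [[1,0,0],[0,a,b],[0,b,a]]`
(`a = (λ₁+λ₃)/2`, `b = (λ₃−λ₁)/2`), `ê = (1,1,0)/√2`, and the Type-I twin
solution `a_I = 2(U₁⁻¹ê/|U₁⁻¹ê|² − U₁ê)`, `n̂_I = ê`:
(i) the second cofactor condition holds, and
(ii) for every `μ ∈ [0,1]` the CC3′ quantity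
`tr(U₁²) − det(U₁²) + (μ²−μ)|a_I|² − 2` equals
`(2μ(μ−1)+1)(λ₁²−1)²/(2λ₁²−1)` and is strictly positive. -/
theorem extreme_compatibility_ortho_typeI
    (l1 l3 a b : ℝ)
    (hl1lo : 1 / Real.sqrt 2 < l1) (hl1hi : l1 < 1)
    (hl3 : l3 = l1 / Real.sqrt (2 * l1 ^ 2 - 1))
    (ha : a = (l1 + l3) / 2) (hb : b = (l3 - l1) / 2)
    (U1 : M3) (hU1 : U1 = !![1, 0, 0; 0, a, b; 0, b, a])
    (e : V3) (he : e = (1 / Real.sqrt 2) • ![1, 1, 0])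
    (aI : V3)
    (haI : aI = (2 : ℝ) •
      ((1 / ((U1⁻¹).mulVec e ⬝ᵥ (U1⁻¹).mulVec e)) • (U1⁻¹).mulVec e -
        U1.mulVec e)) :
    aI ⬝ᵥ (U1 * cofMat (U1 * U1 - 1)).mulVec e = 0 ∧
    ∀ μ : ℝ, 0 ≤ μ → μ ≤ 1 →
      (U1 * U1).trace - (U1 * U1).det + (μ ^ 2 - μ) * (aI ⬝ᵥ aI) - 2 =
        (2 * μ * (μ - 1) + 1) * (l1 ^ 2 - 1) ^ 2 / (2 * l1 ^ 2 - 1) ∧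
      0 < (U1 * U1).trace - (U1 * U1).det + (μ ^ 2 - μ) * (aI ⬝ᵥ aI) - 2 := by
  subst ha; subst hb
  set a := (l1 + l3) / 2 with ha
  set b := (l3 - l1) / 2 with hb
  have ht2 : (Real.sqrt 2) ^ 2 = 2 := Real.sq_sqrt (by norm_num)
  have ht0 : 0 < Real.sqrt 2 := Real.sqrt_pos.2 (by norm_num)
  have hl10 : 0 < l1 := lt_trans (by positivity) hl1lo
  have h1t : 1 < l1 * Real.sqrt 2 := by
    rw [div_lt_iff₀ ht0] at hl1lo; linarith
  have h2l : 0 < 2 * l1 ^ 2 - 1 := by nlinarith [h1t, ht2, ht0.le]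
  set s := Real.sqrt (2 * l1 ^ 2 - 1) with hsdef
  have hs2 : s ^ 2 = 2 * l1 ^ 2 - 1 := Real.sq_sqrt h2l.le
  have hs0 : 0 < s := Real.sqrt_pos.2 h2l
  have hl30 : 0 < l3 := by rw [hl3]; positivity
  have hl3sq : l3 ^ 2 * s ^ 2 = l1 ^ 2 := by rw [hl3]; field_simp
  have hkey : l1 ^ 2 + l3 ^ 2 = 2 * l1 ^ 2 * l3 ^ 2 := by
    linear_combination l3 ^ 2 * hs2 - hl3sq
  have hL0 : l1 * l3 ≠ 0 := by positivity
  have habL : a ^ 2 - b ^ 2 = l1 * l3 := by rw [ha, hb]; ring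
  -- inverse of U1
  have hInv : U1⁻¹ = !![1, 0, 0; 0, a / (l1 * l3), -(b / (l1 * l3));
      0, -(b / (l1 * l3)), a / (l1 * l3)] := by
    apply Matrix.inv_eq_right_inv
    rw [hU1, Matrix.mul_fin_three, Matrix.one_fin_three]
    ext i j
    fin_cases i <;> fin_cases j <;>
      (try simp) <;> (try field_simp) <;>
      first
        | rfl
        | ring
        | linear_combination habL
        | linear_combination l1 * l3 * habL
        | linear_combination (l1 * l3) ^ 2 * habL
  have hw : (U1⁻¹).mulVec e =
      (1 / Real.sqrt 2) • ![1, a / (l1 * l3), -(b / (l1 * l3))] := by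
    rw [hInv, he, Matrix.mulVec_smul]
    congr 1
    ext i
    fin_cases i <;>
      simp [Matrix.mulVec, dotProduct, Fin.sum_univ_three]
  have hue : U1.mulVec e = (1 / Real.sqrt 2) • ![1, a, b] := by
    rw [hU1, he, Matrix.mulVec_smul]
    congr 1
    ext i
    fin_cases i <;>
      simp [Matrix.mulVec, dotProduct, Fin.sum_univ_three]
  have hnorm : (U1⁻¹).mulVec e ⬝ᵥ (U1⁻¹).mulVec e = 1 := by
    rw [hw]
    simp only [smul_dotProduct, dotProduct_smul, smul_eq_mul,
      dotProduct, Fin.sum_univ_three]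
    simp
    field_simp
    simp only [ht2, show Real.sqrt 2 ^ 4 = 4 by nlinarith [ht2]]
    linear_combination (1 / 2) * hkey
  have haIv : aI = ![0,
      2 * ((1 / Real.sqrt 2) * (a / (l1 * l3)) - (1 / Real.sqrt 2) * a),
      2 * ((1 / Real.sqrt 2) * (-(b / (l1 * l3))) - (1 / Real.sqrt 2) * b)] := by
    rw [haI, hnorm, hw, hue]
    ext i
    fin_cases i <;> (try simp) <;> ring
  have haIdot : aI ⬝ᵥ aI = 2 * (l1 ^ 2 * l3 ^ 2 - 1) := by
    rw [haIv]
    simp only [dotProduct, Fin.sum_univ_three]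
    simp
    field_simp
    ring_nf
    simp only [ht2, show Real.sqrt 2 ^ 4 = 4 by nlinarith [ht2]]
    linear_combination (1 + l1 ^ 2 * l3 ^ 2) * hkey
  -- part (i)
  have hC : U1 * U1 - 1 = !![0, 0, 0; 0, a^2 + b^2 - 1, 2*(a*b);
      0, 2*(a*b), a^2 + b^2 - 1] := by
    rw [hU1, Matrix.mul_fin_three, Matrix.one_fin_three]
    ext i j
    fin_cases i <;> fin_cases j <;>
      (try simp [Matrix.vecHead, Matrix.vecTail, -mul_eq_zero]) <;> (try ring)
  have hcof : cofMat (U1 * U1 - 1) =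
      !![(a^2 + b^2 - 1)^2 - (2*(a*b))^2, 0, 0; 0, 0, 0; 0, 0, 0] := by
    rw [hC]
    unfold cofMat
    rw [Matrix.adjugate_fin_three]
    ext i j
    fin_cases i <;> fin_cases j <;>
      (try simp [Matrix.transpose_apply, Matrix.vecHead, Matrix.vecTail,
        -mul_eq_zero]) <;> (try ring)
  have hprod : U1 * cofMat (U1 * U1 - 1) =
      !![(a^2 + b^2 - 1)^2 - (2*(a*b))^2, 0, 0; 0, 0, 0; 0, 0, 0] := by
    rw [hcof, hU1, Matrix.mul_fin_three]
    ext i j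
    fin_cases i <;> fin_cases j <;>
      (try simp [Matrix.vecHead, Matrix.vecTail, -mul_eq_zero]) <;> (try ring)
  have part1 : aI ⬝ᵥ (U1 * cofMat (U1 * U1 - 1)).mulVec e = 0 := by
    rw [hprod, he, Matrix.mulVec_smul, haIv]
    simp [Matrix.mulVec, dotProduct, Fin.sum_univ_three]
  -- part (ii)
  have htr : (U1 * U1).trace = 1 + 2*(a^2 + b^2) := by
    rw [hU1, Matrix.mul_fin_three, Matrix.trace_fin_three]
    simp
    ring
  have hdet : (U1 * U1).det = (a^2 - b^2)^2 := by
    rw [hU1, Matrix.mul_fin_three, Matrix.det_fin_three]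
    simp
    ring
  have hL2 : l1 ^ 2 * l3 ^ 2 * (2 * l1 ^ 2 - 1) = l1 ^ 4 := by
    linear_combination l1 ^ 2 * hl3sq - l1 ^ 2 * l3 ^ 2 * hs2
  have hfac : (l1 ^ 2 - 1) ^ 2 = (l1 ^ 2 * l3 ^ 2 - 1) * (2 * l1 ^ 2 - 1) := by
    linear_combination -hL2
  refine ⟨part1, fun μ _ _ => ?_⟩
  have heq : (U1 * U1).trace - (U1 * U1).det + (μ ^ 2 - μ) * (aI ⬝ᵥ aI) - 2 =
      (2 * μ * (μ - 1) + 1) * (l1 ^ 2 - 1) ^ 2 / (2 * l1 ^ 2 - 1) := by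
    rw [htr, hdet, haIdot, ha, hb, eq_div_iff h2l.ne']
    linear_combination (2 * l1 ^ 2 - 1) * hkey - (2 * μ * (μ - 1) + 1) * hfac
  refine ⟨heq, ?_⟩
  rw [heq]
  apply div_pos _ h2l
  have h1 : 0 < 2 * μ * (μ - 1) + 1 := by nlinarith [sq_nonneg (2 * μ - 1)]
  have h2 : 0 < (l1 ^ 2 - 1) ^ 2 := by
    have h3 : l1 ^ 2 - 1 < 0 := by nlinarith
    nlinarith [h3]
  exact mul_pos h1 h2
end
end
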